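/- arXiv:2204.13148 — 7 statements merged into one kernel-verified Lean document; each statement's English description precedes it below -/
import Mathlib

section
/- If G = (X ∪ Y, E) is a bipartite chain graph with Tr(G) = m + 1, then G contains either K_{m,m} or K_{m,m}−e as an induced subgraph. -/
/-- `A` dominates `B` in `G`: every vertex of `B` has a neighbour in `A`. -/
def SimpleGraph.Dominates {V : Type*} (G : SimpleGraph V) (A B : Finset V) : Prop :=
  ∀ b ∈ B, ∃ a ∈ A, G.Adj a b

/-- `P : Fin k → Finset V` is a transitive `k`-partition of `G`. -/
def SimpleGraph.IsTransitivePartition {V : Type*} (G : SimpleGraph V)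
    {k : ℕ} (P : Fin k → Finset V) : Prop :=
  (∀ i, (P i).Nonempty) ∧ (∀ v : V, ∃! i, v ∈ P i) ∧
  (∀ i j : Fin k, i < j → G.Dominates (P i) (P j))

/-- The transitivity `Tr(G)`: the largest `k` admitting a transitive `k`-partition. -/
noncomputable def SimpleGraph.transitivity {V : Type*} [Fintype V] (G : SimpleGraph V) : ℕ :=
  sSup {k : ℕ | ∃ P : Fin k → Finset V, G.IsTransitivePartition P}

/-- `H` is (isomorphic to) a subgraph of `G`. -/
def ContainsSubgraph {α β : Type*} (H : SimpleGraph α) (G : SimpleGraph β) : Prop :=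
  ∃ f : α → β, Function.Injective f ∧ ∀ a b, H.Adj a b → G.Adj (f a) (f b)

/-- `H` is (isomorphic to) an induced subgraph of `G`. -/
def ContainsInduced {α β : Type*} (H : SimpleGraph α) (G : SimpleGraph β) : Prop :=
  Nonempty (H ↪g G)

/-- The complete bipartite graph `K_{t,t}`. -/
def Ktt (t : ℕ) : SimpleGraph (Fin t ⊕ Fin t) := completeBipartiteGraph (Fin t) (Fin t)

/-- `K_{t,t}` minus one edge. -/
def KttMinusE (t : ℕ) : SimpleGraph (Fin t ⊕ Fin t) :=
  (Ktt t).deleteEdges {e | ∃ h : 0 < t, e = s(Sum.inl ⟨0, h⟩, Sum.inr ⟨0, h⟩)}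

/-- A graph on `Fin m ⊕ Fin n` is a bipartite chain graph (w.r.t. the canonical
orderings of the two sides): edges only go between the two sides, and
neighbourhoods are nested along each ordering. -/
def IsBipartiteChain {m n : ℕ} (G : SimpleGraph (Fin m ⊕ Fin n)) : Prop :=
  (∀ i j : Fin m, ¬ G.Adj (Sum.inl i) (Sum.inl j)) ∧
  (∀ i j : Fin n, ¬ G.Adj (Sum.inr i) (Sum.inr j)) ∧
  (∀ i j : Fin m, i ≤ j → ∀ y : Fin n, G.Adj (Sum.inl j) (Sum.inr y) → G.Adj (Sum.inl i) (Sum.inr y)) ∧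
  (∀ i j : Fin n, i ≤ j → ∀ x : Fin m, G.Adj (Sum.inl x) (Sum.inr j) → G.Adj (Sum.inl x) (Sum.inr i))

/-!
The neighbourhood of a vertex of a chain graph is an initial segment of the other side, so it
suffices to find the edges `x_{m-1}y_{m-2}` and `x_{m-2}y_{m-1}`: the first `m` vertices of each
side then induce `K_{m,m}` or `K_{m,m} - e`, according as `x_{m-1}y_{m-1}` is an edge.

In a transitive partition `V_0, …, V_m`, every vertex of `V_t` has a neighbour, necessarily on the
other side, in each `V_s` with `s < t`; as `V_m` is nonempty, at least `m` classes meet `X` and at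
least `m` meet `Y`. The vertices of least index in two distinct classes are adjacent. Taking the
first vertex `x_p` of largest index over the classes meeting `X` gives `p ≥ m - 1`, and then the
first vertex `y_q` of largest index over the at least `m - 1` other classes meeting `Y` gives
`q ≥ m - 2`. Exchanging the sides gives the other edge.
-/

open Finset Sum

theorem containsInduced_of_le_completeBipartiteGraph {α β γ δ : Type*}
    {H : SimpleGraph (α ⊕ β)} {G : SimpleGraph (γ ⊕ δ)}
    (hH : H ≤ completeBipartiteGraph α β) (hG : G ≤ completeBipartiteGraph γ δ)
    (f : α ↪ γ) (g : β ↪ δ)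
    (hfg : ∀ i j, H.Adj (inl i) (inr j) ↔ G.Adj (inl (f i)) (inr (g j))) :
    ContainsInduced H G := by
  refine ⟨{ toEmbedding := f.sumMap g, map_rel_iff' := ?_ }⟩
  rintro (i | i) (j | j)
  · exact iff_of_false (fun h => by simpa using hG h) (fun h => by simpa using hH h)
  · exact (hfg i j).symm
  · exact G.adj_comm _ _ |>.trans ((hfg j i).symm.trans (H.adj_comm _ _))
  · exact iff_of_false (fun h => by simpa using hG h) (fun h => by simpa using hH h)

theorem kttMinusE_le (m : ℕ) : KttMinusE m ≤ completeBipartiteGraph (Fin m) (Fin m) :=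
  SimpleGraph.deleteEdges_le _

theorem kttMinusE_adj_inl_inr {m : ℕ} {i j : Fin m} :
    (KttMinusE m).Adj (inl i) (inr j) ↔ ¬((i : ℕ) = 0 ∧ (j : ℕ) = 0) := by
  simp [KttMinusE, Ktt, Fin.ext_iff, i.pos]

theorem Finset.exists_mem_le_of_lt_card {n c : ℕ} {T : Finset (Fin n)} (h : c < #T) :
    ∃ x ∈ T, c ≤ (x : ℕ) := by
  by_contra! hT
  have : #T ≤ #(range c) :=
    card_le_card_of_injOn Fin.val (fun x hx => mem_range.2 (hT x hx)) Fin.val_injective.injOn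
  rw [card_range] at this
  omega

theorem le_card_of_lt_closed {m : ℕ} (hm : 1 ≤ m) {A B : Finset (Fin (m + 1))}
    (hAB : ∀ t ∈ A, ∀ s < t, s ∈ B) (hBA : ∀ t ∈ B, ∀ s < t, s ∈ A)
    (htop : Fin.last m ∈ A ∪ B) : m ≤ #A ∧ m ≤ #B := by
  wlog hA : Fin.last m ∈ A generalizing A B
  · exact (this hBA hAB (by rwa [union_comm]) ((mem_union.1 htop).resolve_left hA)).symm
  set t : Fin (m + 1) := ⟨m - 1, by omega⟩
  have ht : t < Fin.last m := by simp [t, Fin.lt_def]; omega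
  have htop_notMem : Fin.last m ∉ Iio t := by simpa using ht.le
  constructor
  · calc m = #((Iio t).cons (Fin.last m) htop_notMem) := by
          rw [card_cons, Fin.card_Iio]; show m = m - 1 + 1; omega
      _ ≤ #A := card_le_card fun s hs => by
          rcases mem_cons.1 hs with rfl | hs
          exacts [hA, hBA t (hAB _ hA t ht) s (mem_Iio.1 hs)]
  · calc m = #(Iio (Fin.last m)) := by simp
      _ ≤ #B := card_le_card fun s hs => hAB _ hA s (mem_Iio.1 hs)

namespace SimpleGraph.IsTransitivePartition

variable {V : Type*} {G : SimpleGraph V} {k : ℕ} {P : Fin k → Finset V}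

noncomputable def classOf (hP : G.IsTransitivePartition P) (v : V) : Fin k :=
  (hP.2.1 v).exists.choose

theorem classOf_eq_iff (hP : G.IsTransitivePartition P) {v : V} {s : Fin k} :
    hP.classOf v = s ↔ v ∈ P s :=
  ⟨fun h => h ▸ (hP.2.1 v).exists.choose_spec,
    fun h => (hP.2.1 v).unique (hP.2.1 v).exists.choose_spec h⟩

theorem card_le [Fintype V] (hP : G.IsTransitivePartition P) : k ≤ Fintype.card V := by
  simpa using Fintype.card_le_of_surjective hP.classOf fun s =>
    (hP.1 s).imp fun _ hv => hP.classOf_eq_iff.2 hv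

theorem exists_adj_classOf_eq (hP : G.IsTransitivePartition P) {s : Fin k} {v : V}
    (h : s < hP.classOf v) : ∃ u, hP.classOf u = s ∧ G.Adj u v := by
  obtain ⟨u, hu, huv⟩ := hP.2.2 s _ h v (hP.classOf_eq_iff.1 rfl)
  exact ⟨u, hP.classOf_eq_iff.2 hu, huv⟩

open Classical in
noncomputable def leastInClass (hP : G.IsTransitivePartition P) {c : ℕ} (e : Fin c → V) :
    Finset (Fin c) :=
  {x | ∀ y, hP.classOf (e y) = hP.classOf (e x) → x ≤ y}

theorem mem_leastInClass (hP : G.IsTransitivePartition P) {c : ℕ} {e : Fin c → V} {x : Fin c} :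
    x ∈ hP.leastInClass e ↔ ∀ y, hP.classOf (e y) = hP.classOf (e x) → x ≤ y := by
  simp [leastInClass]

theorem exists_mem_leastInClass (hP : G.IsTransitivePartition P) {c : ℕ} (e : Fin c → V)
    (x : Fin c) : ∃ y ∈ hP.leastInClass e, hP.classOf (e y) = hP.classOf (e x) := by
  classical
  set T : Finset (Fin c) := {y | hP.classOf (e y) = hP.classOf (e x)}
  have hT : T.Nonempty := ⟨x, by simp [T]⟩
  have hmin : hP.classOf (e (T.min' hT)) = hP.classOf (e x) := by
    simpa [T] using T.min'_mem hT
  refine ⟨T.min' hT, hP.mem_leastInClass.2 fun y hy => T.min'_le y ?_, hmin⟩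
  simpa [T, hmin] using hy

theorem exists_mem_leastInClass_le (hP : G.IsTransitivePartition P) {c : ℕ} (e : Fin c → V)
    {C : Finset (Fin k)} (hC : ∀ s ∈ C, ∃ x, hP.classOf (e x) = s) {n : ℕ} (hn : n < #C) :
    ∃ x ∈ hP.leastInClass e, hP.classOf (e x) ∈ C ∧ n ≤ (x : ℕ) := by
  classical
  set L := (hP.leastInClass e).filter fun x => hP.classOf (e x) ∈ C
  have hCL : C ⊆ L.image (hP.classOf ∘ e) := by
    intro s hs
    obtain ⟨x, rfl⟩ := hC s hs
    obtain ⟨y, hy, hyx⟩ := hP.exists_mem_leastInClass e x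
    exact mem_image.2 ⟨y, mem_filter.2 ⟨hy, hyx ▸ hs⟩, hyx⟩
  obtain ⟨x, hx, hnx⟩ :=
    exists_mem_le_of_lt_card (hn.trans_le ((card_le_card hCL).trans card_image_le))
  exact ⟨x, (mem_filter.1 hx).1, (mem_filter.1 hx).2, hnx⟩

end SimpleGraph.IsTransitivePartition

theorem SimpleGraph.exists_isTransitivePartition {V : Type*} [Fintype V] (G : SimpleGraph V)
    (h : 0 < G.transitivity) :
    ∃ P : Fin G.transitivity → Finset V, G.IsTransitivePartition P := by
  set S := {k : ℕ | ∃ P : Fin k → Finset V, G.IsTransitivePartition P}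
  have hS : S.Nonempty := Set.nonempty_iff_ne_empty.2 fun hS => by
    simp [transitivity, S, hS] at h
  exact Nat.sSup_mem hS ⟨Fintype.card V, fun _ ⟨_, hP⟩ => hP.card_le⟩

namespace IsBipartiteChain

variable {a b : ℕ} {G : SimpleGraph (Fin a ⊕ Fin b)} {k : ℕ}
  {P : Fin k → Finset (Fin a ⊕ Fin b)}

theorem adj_of_le (hG : IsBipartiteChain G) {p p' : Fin a} {q q' : Fin b}
    (h : G.Adj (inl p) (inr q)) (hp : p' ≤ p) (hq : q' ≤ q) : G.Adj (inl p') (inr q') :=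
  hG.2.2.2 q' q hq p' (hG.2.2.1 p' p hp q h)

theorem le_completeBipartiteGraph (hG : IsBipartiteChain G) :
    G ≤ completeBipartiteGraph (Fin a) (Fin b) := by
  rintro (p | q) (p' | q') h
  · exact absurd h (hG.1 p p')
  · simp
  · simp
  · exact absurd h (hG.2.1 q q')

theorem containsInduced_ktt (hG : IsBipartiteChain G) {m : ℕ} {p : Fin a} {q : Fin b}
    (h : G.Adj (inl p) (inr q)) (hp : m ≤ (p : ℕ) + 1) (hq : m ≤ (q : ℕ) + 1) :
    ContainsInduced (Ktt m) G :=
  containsInduced_of_le_completeBipartiteGraph le_rfl hG.le_completeBipartiteGraph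
    (Fin.castLEEmb (by omega)) (Fin.castLEEmb (by omega)) fun i j =>
    iff_of_true (by simp [Ktt]) (hG.adj_of_le h (by simp [Fin.le_def]; omega)
      (by simp [Fin.le_def]; omega))

/-- Reversing both sides sends the missing edge `x₀y₀` of `K_{m,m} - e` to `x_{m-1}y_{m-1}`. -/
theorem containsInduced_kttMinusE (hG : IsBipartiteChain G) {m : ℕ} {p₁ p₂ : Fin a}
    {q₁ q₂ : Fin b} (h₁ : G.Adj (inl p₁) (inr q₁)) (hp₁ : m ≤ (p₁ : ℕ) + 1)
    (hq₁ : m ≤ (q₁ : ℕ) + 2) (h₂ : G.Adj (inl p₂) (inr q₂)) (hp₂ : m ≤ (p₂ : ℕ) + 2)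
    (hq₂ : m ≤ (q₂ : ℕ) + 1)
    (hc : ∀ (p : Fin a) (q : Fin b),
      G.Adj (inl p) (inr q) → m ≤ (p : ℕ) + 1 → (q : ℕ) + 1 < m) :
    ContainsInduced (KttMinusE m) G := by
  refine containsInduced_of_le_completeBipartiteGraph (kttMinusE_le m)
    hG.le_completeBipartiteGraph
    (Fin.revPerm.toEmbedding.trans (Fin.castLEEmb (by omega)))
    (Fin.revPerm.toEmbedding.trans (Fin.castLEEmb (by omega))) fun i j => ?_
  simp only [kttMinusE_adj_inl_inr, Function.Embedding.trans_apply, Equiv.coe_toEmbedding,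
    Fin.revPerm_apply, Fin.castLEEmb_apply]
  constructor
  · intro hij
    by_cases hi : (i : ℕ) = 0
    · exact hG.adj_of_le h₁ (by simp [Fin.le_def]; omega) (by simp [Fin.le_def]; omega)
    · exact hG.adj_of_le h₂ (by simp [Fin.le_def]; omega) (by simp [Fin.le_def]; omega)
  · rintro h ⟨hi, hj⟩
    have := hc _ _ h (by simp only [Fin.val_castLE, Fin.val_rev]; omega)
    simp only [Fin.val_castLE, Fin.val_rev] at this
    omega

theorem exists_inr_adj (hG : IsBipartiteChain G) (hP : G.IsTransitivePartition P) {s : Fin k}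
    {p : Fin a} (h : s < hP.classOf (inl p)) :
    ∃ q, hP.classOf (inr q) = s ∧ G.Adj (inl p) (inr q) := by
  obtain ⟨u, hu, hadj⟩ := hP.exists_adj_classOf_eq h
  cases u with
  | inl p' => exact absurd hadj (hG.1 p' p)
  | inr q => exact ⟨q, hu, hadj.symm⟩

theorem exists_inl_adj (hG : IsBipartiteChain G) (hP : G.IsTransitivePartition P) {s : Fin k}
    {q : Fin b} (h : s < hP.classOf (inr q)) :
    ∃ p, hP.classOf (inl p) = s ∧ G.Adj (inl p) (inr q) := by
  obtain ⟨u, hu, hadj⟩ := hP.exists_adj_classOf_eq h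
  cases u with
  | inl p => exact ⟨p, hu, hadj⟩
  | inr q' => exact absurd hadj (hG.2.1 q' q)

theorem exists_adj_of_one_lt (hG : IsBipartiteChain G) (hP : G.IsTransitivePartition P)
    (hk : 1 < k) : ∃ p q, G.Adj (inl p) (inr q) := by
  obtain ⟨v, hv⟩ := hP.1 ⟨1, hk⟩
  have h0 : (⟨0, by omega⟩ : Fin k) < hP.classOf v := by
    rw [hP.classOf_eq_iff.2 hv, Fin.mk_lt_mk]
    exact Nat.one_pos
  cases v with
  | inl p => exact (hG.exists_inr_adj hP h0).elim fun q h => ⟨p, q, h.2⟩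
  | inr q => exact (hG.exists_inl_adj hP h0).elim fun p h => ⟨p, q, h.2⟩

/-- The earlier of the two classes contains a neighbour of the other vertex, and that neighbour
has index at least the least one of its class. -/
theorem adj_of_mem_leastInClass (hG : IsBipartiteChain G) (hP : G.IsTransitivePartition P)
    {p : Fin a} {q : Fin b} (hp : p ∈ hP.leastInClass inl) (hq : q ∈ hP.leastInClass inr)
    (hne : hP.classOf (inl p) ≠ hP.classOf (inr q)) : G.Adj (inl p) (inr q) := by
  rcases hne.lt_or_gt with h | h
  · obtain ⟨p', hp', hadj⟩ := hG.exists_inl_adj hP h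
    exact hG.adj_of_le hadj (hP.mem_leastInClass.1 hp p' hp') le_rfl
  · obtain ⟨q', hq', hadj⟩ := hG.exists_inr_adj hP h
    exact hG.adj_of_le hadj le_rfl (hP.mem_leastInClass.1 hq q' hq')

theorem exists_adj_of_isTransitivePartition (hG : IsBipartiteChain G) {m : ℕ}
    {P : Fin (m + 1) → Finset (Fin a ⊕ Fin b)} (hP : G.IsTransitivePartition P) (hm : 2 ≤ m) :
    (∃ p q, G.Adj (inl p) (inr q) ∧ m ≤ (p : ℕ) + 1 ∧ m ≤ (q : ℕ) + 2) ∧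
      (∃ p q, G.Adj (inl p) (inr q) ∧ m ≤ (p : ℕ) + 2 ∧ m ≤ (q : ℕ) + 1) := by
  classical
  set A : Finset (Fin (m + 1)) := {s | ∃ p, hP.classOf (inl p) = s}
  set B : Finset (Fin (m + 1)) := {s | ∃ q, hP.classOf (inr q) = s}
  have hmemA : ∀ s ∈ A, ∃ p, hP.classOf (inl p) = s := by simp [A]
  have hmemB : ∀ s ∈ B, ∃ q, hP.classOf (inr q) = s := by simp [B]
  obtain ⟨hA, hB⟩ : m ≤ #A ∧ m ≤ #B := by
    refine le_card_of_lt_closed (by omega) ?_ ?_ ?_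
    · rintro t ht s hst
      obtain ⟨p, rfl⟩ := hmemA t ht
      simpa [B] using (hG.exists_inr_adj hP hst).imp fun _ => And.left
    · rintro t ht s hst
      obtain ⟨q, rfl⟩ := hmemB t ht
      simpa [A] using (hG.exists_inl_adj hP hst).imp fun _ => And.left
    · obtain ⟨v, hv⟩ := hP.1 (Fin.last m)
      rw [← hP.classOf_eq_iff] at hv
      cases v with
      | inl p => exact mem_union_left _ (by simpa [A] using ⟨p, hv⟩)
      | inr q => exact mem_union_right _ (by simpa [B] using ⟨q, hv⟩)
  constructor
  · obtain ⟨p, hp, -, hpm⟩ := hP.exists_mem_leastInClass_le inl hmemA (n := m - 1) (by omega)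
    obtain ⟨q, hq, hqB, hqm⟩ := hP.exists_mem_leastInClass_le inr
      (C := B.erase (hP.classOf (inl p))) (fun s hs => hmemB s (mem_of_mem_erase hs)) (n := m - 2)
      (by have := pred_card_le_card_erase (s := B) (a := hP.classOf (inl p)); omega)
    exact ⟨p, q, hG.adj_of_mem_leastInClass hP hp hq (ne_of_mem_erase hqB).symm,
      by omega, by omega⟩
  · obtain ⟨q, hq, -, hqm⟩ := hP.exists_mem_leastInClass_le inr hmemB (n := m - 1) (by omega)
    obtain ⟨p, hp, hpA, hpm⟩ := hP.exists_mem_leastInClass_le inl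
      (C := A.erase (hP.classOf (inr q))) (fun s hs => hmemA s (mem_of_mem_erase hs)) (n := m - 2)
      (by have := pred_card_le_card_erase (s := A) (a := hP.classOf (inr q)); omega)
    exact ⟨p, q, hG.adj_of_mem_leastInClass hP hp hq (ne_of_mem_erase hpA), by omega, by omega⟩

end IsBipartiteChain

/-- If `G` is a bipartite chain graph with `Tr(G) = m + 1`, then `G` contains
`K_{m,m}` or `K_{m,m} - e` as an induced subgraph. -/
theorem bipartiteChain_contains_of_transitivity {a b : ℕ} (G : SimpleGraph (Fin a ⊕ Fin b))
    (hchain : IsBipartiteChain G) (m : ℕ) (htr : G.transitivity = m + 1) :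
    ContainsInduced (Ktt m) G ∨ ContainsInduced (KttMinusE m) G := by
  obtain ⟨P, hP⟩ := htr ▸ G.exists_isTransitivePartition (by omega)
  rcases Nat.lt_or_ge m 2 with hm | hm
  · left
    interval_cases m
    · exact ⟨RelEmbedding.ofIsEmpty _ _⟩
    · obtain ⟨p, q, h⟩ := hchain.exists_adj_of_one_lt hP (by omega)
      exact hchain.containsInduced_ktt h (by omega) (by omega)
  by_cases hc : ∃ (p : Fin a) (q : Fin b),
      G.Adj (inl p) (inr q) ∧ m ≤ (p : ℕ) + 1 ∧ m ≤ (q : ℕ) + 1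
  · obtain ⟨p, q, h, hp, hq⟩ := hc
    exact Or.inl (hchain.containsInduced_ktt h hp hq)
  · push Not at hc
    obtain ⟨⟨p₁, q₁, h₁, hp₁, hq₁⟩, ⟨p₂, q₂, h₂, hp₂, hq₂⟩⟩ :=
      hchain.exists_adj_of_isTransitivePartition hP hm
    exact Or.inr (hchain.containsInduced_kttMinusE h₁ hp₁ hq₁ h₂ hp₂ hq₂ hc)
end

section
/- For every integer t ≥ 1, the transitivity of the complete bipartite graph K_{t,t} equals t + 1. -/
lemma ktt_adj_lr (t : ℕ) (a b : Fin t) : (Ktt t).Adj (Sum.inl a) (Sum.inr b) := by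
  simp [Ktt]

lemma ktt_adj_rl (t : ℕ) (a b : Fin t) : (Ktt t).Adj (Sum.inr a) (Sum.inl b) := by
  simp [Ktt]

lemma ktt_not_adj_rr (t : ℕ) (a b : Fin t) : ¬ (Ktt t).Adj (Sum.inr a) (Sum.inr b) := by
  simp [Ktt]

open Finset in
lemma ktt_exists_partition (t : ℕ) (ht : 1 ≤ t) :
    ∃ P : Fin (t+1) → Finset (Fin t ⊕ Fin t), (Ktt t).IsTransitivePartition P := by
  classical
  set f : (Fin t ⊕ Fin t) → Fin (t+1) := fun v =>
    match v with
    | Sum.inl a => ⟨min a (t-1), by omega⟩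
    | Sum.inr a => if (a : ℕ) < t - 1 then ⟨a, by omega⟩ else ⟨t, by omega⟩
    with hf
  refine ⟨fun i => univ.filter (fun v => f v = i), ?_, ?_, ?_⟩
  · intro i
    rcases lt_or_ge (i : ℕ) t with h | h
    · refine ⟨Sum.inl ⟨i, h⟩, ?_⟩
      simp only [mem_filter, mem_univ, true_and, hf]
      apply Fin.ext
      simp only []
      omega
    · have hi : (i : ℕ) = t := by omega
      refine ⟨Sum.inr ⟨t - 1, by omega⟩, ?_⟩
      simp only [mem_filter, mem_univ, true_and, hf]
      rw [if_neg (by omega)]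
      exact Fin.ext hi.symm
  · intro v
    refine ⟨f v, by simp, fun j hj => ?_⟩
    simp only [mem_filter] at hj
    exact hj.2.symm ▸ rfl
  · intro i j hij b hb
    simp only [mem_filter, mem_univ, true_and] at hb
    have hij' : (i : ℕ) < (j : ℕ) := hij
    have hjt : (j : ℕ) ≤ t := by omega
    match b with
    | Sum.inl x =>
      -- f b = min x (t-1) ≤ t-1, so j ≤ t-1, so i < t-1
      have hjv : (j : ℕ) = min (x : ℕ) (t - 1) := by
        rw [← hb]
      have hilt : (i : ℕ) < t - 1 := by omega
      refine ⟨Sum.inr ⟨i, by omega⟩, ?_, ktt_adj_rl t _ _⟩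
      simp only [mem_filter, mem_univ, true_and, hf]
      rw [if_pos (by simpa using hilt)]
    | Sum.inr x =>
      refine ⟨Sum.inl ⟨i, by omega⟩, ?_, ktt_adj_lr t _ _⟩
      simp only [mem_filter, mem_univ, true_and, hf]
      apply Fin.ext
      simp only []
      omega

open Finset in
lemma ktt_partition_le (t : ℕ) (ht : 1 ≤ t) {k : ℕ} (P : Fin k → Finset (Fin t ⊕ Fin t))
    (hP : (Ktt t).IsTransitivePartition P) : k ≤ t + 1 := by
  classical
  obtain ⟨hne, huniq, hdom⟩ := hP
  set p : Fin k → Prop := fun i => ∀ a : Fin t, Sum.inl a ∉ P i with hp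
  set S : Finset (Fin k) := univ.filter p with hS
  set T : Finset (Fin k) := univ.filter (fun i => ¬ p i) with hT
  have hcard : S.card + T.card = k := by
    rw [hS, hT, Finset.card_filter_add_card_filter_not, card_univ, Fintype.card_fin]
  -- S has at most one element
  have key : ∀ i j : Fin k, i ∈ S → j ∈ S → i < j → False := by
    intro i j hi hj hlt
    simp only [hS, mem_filter, mem_univ, true_and, hp] at hi hj
    obtain ⟨b, hb⟩ := hne j
    match b with
    | Sum.inl x => exact hj x hb
    | Sum.inr x =>
      obtain ⟨a, ha, hadj⟩ := hdom i j hlt _ hb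
      match a with
      | Sum.inl y => exact hi y ha
      | Sum.inr y => exact ktt_not_adj_rr t y x hadj
  have hS1 : S.card ≤ 1 := by
    rw [Finset.card_le_one]
    intro i hi j hj
    by_contra hij
    rcases lt_or_gt_of_ne hij with h | h
    · exact key i j hi hj h
    · exact key j i hj hi h
  -- T has at most t elements
  have hTt : T.card ≤ t := by
    have : T.card ≤ (univ : Finset (Fin t)).card := by
      apply Finset.card_le_card_of_injOn
        (fun i => if h : ∃ a : Fin t, Sum.inl a ∈ P i then h.choose else ⟨0, ht⟩)
      · intro i _; exact mem_univ _
      · intro i hi j hj hgij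
        simp only [hT, Finset.coe_filter, Set.mem_setOf_eq, mem_univ, true_and, hp] at hi hj
        push_neg at hi hj
        simp only [dif_pos hi, dif_pos hj] at hgij
        have hpi : Sum.inl hi.choose ∈ P i := hi.choose_spec
        have hpj : Sum.inl hj.choose ∈ P j := hj.choose_spec
        rw [hgij] at hpi
        obtain ⟨i0, _, hu⟩ := huniq (Sum.inl hj.choose)
        rw [hu i hpi, hu j hpj]
    simpa using this
  omega

/-- For every integer `t ≥ 1`, the transitivity of `K_{t,t}` equals `t + 1`. -/
theorem transitivity_Ktt (t : ℕ) (ht : 1 ≤ t) : (Ktt t).transitivity = t + 1 := by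
  have hmem : (t + 1) ∈ {k : ℕ | ∃ P : Fin k → Finset (Fin t ⊕ Fin t),
      (Ktt t).IsTransitivePartition P} := ktt_exists_partition t ht
  have hub : ∀ k ∈ {k : ℕ | ∃ P : Fin k → Finset (Fin t ⊕ Fin t),
      (Ktt t).IsTransitivePartition P}, k ≤ t + 1 := by
    rintro k ⟨P, hP⟩
    exact ktt_partition_le t ht P hP
  apply le_antisymm
  · exact csSup_le ⟨t + 1, hmem⟩ hub
  · exact le_csSup ⟨t + 1, hub⟩ hmem
end

section
/- Let G = (X ∪ Y, E) be a bipartite chain graph with chain orderings X=(x_1,...,x_m) and Y=(y_1,...,y_n), and let t ≤ min{m,n} be the maximum integer such that G contains either K_{t,t} or K_{t,t}−e as an induced subgraph. Then the subgraph of G induced by X_t ∪ Y_t, where X_t = {x_1,...,x_t} and Y_t = {y_1,...,y_t}, is isomorphic to K_{t,t} or to K_{t,t}−e. -/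
/-- The first `t` vertices of each side of `Fin m ⊕ Fin n`. -/
def prefixSet (m n t : ℕ) : Set (Fin m ⊕ Fin n) :=
  {v | Sum.elim (fun i : Fin m => (i : ℕ) < t) (fun j : Fin n => (j : ℕ) < t) v}

lemma pigeon_aux {t m : ℕ} (g : Fin t → Fin m) (hg : Function.Injective g)
    (s : Finset (Fin t)) (i : ℕ) (hs : i < s.card) : ∃ a ∈ s, i ≤ (g a : ℕ) := by
  by_contra hc
  push_neg at hc
  have h1 : s.card ≤ (Finset.range i).card :=
    Finset.card_le_card_of_injOn (fun a => (g a : ℕ))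
      (fun a ha => Finset.mem_range.2 (hc a ha))
      (fun a _ b _ hab => hg (Fin.val_injective hab))
  simp [Finset.card_range] at h1
  omega

set_option maxHeartbeats 1000000 in
/-- Let `G` be a bipartite chain graph (w.r.t. the canonical chain orderings of
`Fin m` and `Fin n`) and `t ≤ min m n` the maximum integer such that `G` contains
`K_{t,t}` or `K_{t,t} - e` as an induced subgraph.  Then the subgraph induced on
`X_t ∪ Y_t` (the first `t` vertices of each side) is isomorphic to `K_{t,t}` or
to `K_{t,t} - e`. -/
theorem bipartiteChain_prefix_induces {m n : ℕ} (G : SimpleGraph (Fin m ⊕ Fin n))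
    (hchain : IsBipartiteChain G) (t : ℕ) (htmn : t ≤ min m n)
    (hmax : IsGreatest {s : ℕ | ContainsInduced (Ktt s) G ∨ ContainsInduced (KttMinusE s) G} t) :
    Nonempty (G.induce (prefixSet m n t) ≃g Ktt t) ∨
      Nonempty (G.induce (prefixSet m n t) ≃g KttMinusE t) := by
  obtain ⟨hXX, hYY, hmX, hmY⟩ := hchain
  have hm : t ≤ m := le_trans htmn (min_le_left _ _)
  have hn : t ≤ n := le_trans htmn (min_le_right _ _)
  rcases Nat.eq_zero_or_pos t with rfl | hpos
  · left
    haveI he : IsEmpty ↥(prefixSet m n 0) := by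
      constructor; rintro ⟨x | y, h⟩ <;> simp [prefixSet] at h
    exact ⟨⟨Equiv.equivOfIsEmpty _ _, @fun a b => isEmptyElim a⟩⟩
  -- key adjacency fact
  have key : ∀ (x : Fin m) (y : Fin n),
      (((x:ℕ)+1 < t ∧ (y:ℕ) < t) ∨ ((x:ℕ) < t ∧ (y:ℕ)+1 < t)) →
      G.Adj (Sum.inl x) (Sum.inr y) := by
    intro x y hcond
    have ht2 : 2 ≤ t := by rcases hcond with ⟨h1, _⟩ | ⟨_, h1⟩ <;> omega
    have hf : ∃ f : (Fin t ⊕ Fin t) → (Fin m ⊕ Fin n), Function.Injective f ∧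
        ∀ a b : Fin t, (a ≠ ⟨0, hpos⟩ ∨ b ≠ ⟨0, hpos⟩) →
          G.Adj (f (Sum.inl a)) (f (Sum.inr b)) := by
      rcases hmax.1 with ⟨⟨f⟩⟩ | ⟨⟨f⟩⟩
      · exact ⟨f, f.injective, fun a b _ => f.map_rel_iff.2 (by simp [Ktt])⟩
      · refine ⟨f, f.injective, fun a b hab => f.map_rel_iff.2 ?_⟩
        simp only [KttMinusE, SimpleGraph.deleteEdges_adj]
        constructor
        · simp [Ktt]
        · simp only [Set.mem_setOf_eq, not_exists]
          intro h0 heq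
          rw [Sym2.eq_iff] at heq
          rcases heq with ⟨h1, h2⟩ | ⟨h1, h2⟩
          · rcases hab with hab | hab
            · exact hab (Sum.inl.inj h1)
            · exact hab (Sum.inr.inj h2)
          · exact (Sum.inl_ne_inr h1).elim
    obtain ⟨f, finj, fadj⟩ := hf
    set o1 : Fin t := ⟨1, by omega⟩ with ho1
    have one : o1 ≠ ⟨0, hpos⟩ := by simp [ho1, Fin.ext_iff]
    have main : ∃ (g : Fin t → Fin m) (h : Fin t → Fin n),
        Function.Injective g ∧ Function.Injective h ∧
        ∀ a b : Fin t, (a ≠ ⟨0, hpos⟩ ∨ b ≠ ⟨0, hpos⟩) →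
          G.Adj (Sum.inl (g a)) (Sum.inr (h b)) := by
      cases hc : f (Sum.inr o1) with
      | inr u =>
        have hL : ∀ a : Fin t, ∃ xa : Fin m, f (Sum.inl a) = Sum.inl xa := by
          intro a
          have hadj : G.Adj (f (Sum.inl a)) (Sum.inr u) := hc ▸ fadj a o1 (Or.inr one)
          cases hfa : f (Sum.inl a) with
          | inl xa => exact ⟨xa, rfl⟩
          | inr ya => rw [hfa] at hadj; exact absurd hadj (hYY _ _)
        choose g hg using hL
        have hR : ∀ b : Fin t, ∃ yb : Fin n, f (Sum.inr b) = Sum.inr yb := by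
          intro b
          have hadj : G.Adj (Sum.inl (g o1)) (f (Sum.inr b)) :=
            (hg o1) ▸ fadj o1 b (Or.inl one)
          cases hfb : f (Sum.inr b) with
          | inr yb => exact ⟨yb, rfl⟩
          | inl xb => rw [hfb] at hadj; exact absurd hadj (hXX _ _)
        choose h hh using hR
        refine ⟨g, h, ?_, ?_, ?_⟩
        · intro a b hab
          have : f (Sum.inl a) = f (Sum.inl b) := by rw [hg, hg, hab]
          exact Sum.inl.inj (finj this)
        · intro a b hab
          have : f (Sum.inr a) = f (Sum.inr b) := by rw [hh, hh, hab]
          exact Sum.inr.inj (finj this)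
        · intro a b hab
          have := fadj a b hab
          rwa [hg, hh] at this
      | inl u =>
        have hL : ∀ a : Fin t, ∃ ya : Fin n, f (Sum.inl a) = Sum.inr ya := by
          intro a
          have hadj : G.Adj (f (Sum.inl a)) (Sum.inl u) := hc ▸ fadj a o1 (Or.inr one)
          cases hfa : f (Sum.inl a) with
          | inr ya => exact ⟨ya, rfl⟩
          | inl xa => rw [hfa] at hadj; exact absurd hadj (hXX _ _)
        choose h hh using hL
        have hR : ∀ b : Fin t, ∃ xb : Fin m, f (Sum.inr b) = Sum.inl xb := by
          intro b
          have hadj : G.Adj (Sum.inr (h o1)) (f (Sum.inr b)) :=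
            (hh o1) ▸ fadj o1 b (Or.inl one)
          cases hfb : f (Sum.inr b) with
          | inl xb => exact ⟨xb, rfl⟩
          | inr yb => rw [hfb] at hadj; exact absurd hadj (hYY _ _)
        choose g hg using hR
        refine ⟨g, h, ?_, ?_, ?_⟩
        · intro a b hab
          have : f (Sum.inr a) = f (Sum.inr b) := by rw [hg, hg, hab]
          exact Sum.inr.inj (finj this)
        · intro a b hab
          have : f (Sum.inl a) = f (Sum.inl b) := by rw [hh, hh, hab]
          exact Sum.inl.inj (finj this)
        · intro a b hab
          have h2 := fadj b a hab.symm
          rw [hh b, hg a] at h2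
          exact h2.symm
    obtain ⟨g, h, ginj, hinj, E⟩ := main
    have cardne : ((Finset.univ : Finset (Fin t)).erase ⟨0, hpos⟩).card = t - 1 := by
      rw [Finset.card_erase_of_mem (Finset.mem_univ _), Finset.card_univ, Fintype.card_fin]
    rcases hcond with ⟨hx1, hy1⟩ | ⟨hx1, hy1⟩
    · obtain ⟨a, ha, hga⟩ := pigeon_aux g ginj
        ((Finset.univ : Finset (Fin t)).erase ⟨0, hpos⟩) (x : ℕ) (by omega)
      obtain ⟨b, _, hhb⟩ := pigeon_aux h hinj Finset.univ (y : ℕ)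
        (by rw [Finset.card_univ, Fintype.card_fin]; omega)
      have hadj := E a b (Or.inl (Finset.ne_of_mem_erase ha))
      have h1 : G.Adj (Sum.inl (g a)) (Sum.inr y) := hmY y (h b) (Fin.le_def.2 hhb) _ hadj
      exact hmX x (g a) (Fin.le_def.2 hga) _ h1
    · obtain ⟨a, _, hga⟩ := pigeon_aux g ginj Finset.univ (x : ℕ)
        (by rw [Finset.card_univ, Fintype.card_fin]; omega)
      obtain ⟨b, hb, hhb⟩ := pigeon_aux h hinj
        ((Finset.univ : Finset (Fin t)).erase ⟨0, hpos⟩) (y : ℕ) (by omega)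
      have hadj := E a b (Or.inr (Finset.ne_of_mem_erase hb))
      have h1 : G.Adj (Sum.inl (g a)) (Sum.inr y) := hmY y (h b) (Fin.le_def.2 hhb) _ hadj
      exact hmX x (g a) (Fin.le_def.2 hga) _ h1
  -- the reversed prefix equivalence
  let L : Fin t → Fin m := fun a => ⟨t-1-(a:ℕ), by omega⟩
  let R : Fin t → Fin n := fun b => ⟨t-1-(b:ℕ), by omega⟩
  let e : (Fin t ⊕ Fin t) ≃ ↥(prefixSet m n t) :=
    { toFun := Sum.elim
        (fun a => ⟨Sum.inl (L a), by simp [prefixSet, L]; omega⟩)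
        (fun b => ⟨Sum.inr (R b), by simp [prefixSet, R]; omega⟩)
      invFun := fun v => match v with
        | ⟨Sum.inl x, hx⟩ => Sum.inl ⟨t-1-(x:ℕ), by omega⟩
        | ⟨Sum.inr y, hy⟩ => Sum.inr ⟨t-1-(y:ℕ), by omega⟩
      left_inv := by
        rintro (a | b)
        · have := a.isLt; simp [L, Fin.ext_iff]; omega
        · have := b.isLt; simp [R, Fin.ext_iff]; omega
      right_inv := by
        rintro ⟨x | y, hv⟩
        · simp only [prefixSet, Set.mem_setOf_eq, Sum.elim_inl] at hv
          simp [L, Subtype.ext_iff, Fin.ext_iff]; omega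
        · simp only [prefixSet, Set.mem_setOf_eq, Sum.elim_inr] at hv
          simp [R, Subtype.ext_iff, Fin.ext_iff]; omega }
  by_cases hlast : G.Adj (Sum.inl (L ⟨0, hpos⟩)) (Sum.inr (R ⟨0, hpos⟩))
  · left
    have all : ∀ (x : Fin m) (y : Fin n), (x:ℕ) < t → (y:ℕ) < t →
        G.Adj (Sum.inl x) (Sum.inr y) := by
      intro x y hx hy
      exact hmX x (L ⟨0, hpos⟩) (Fin.le_def.2 (by show (x:ℕ) ≤ t-1-0; omega)) y
        (hmY y (R ⟨0, hpos⟩) (Fin.le_def.2 (by show (y:ℕ) ≤ t-1-0; omega)) _ hlast)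
    refine ⟨(SimpleGraph.Iso.symm ⟨e, @fun a b => ?_⟩ : _)⟩
    rcases a with a | a <;> rcases b with b | b
    · simp only [e, Sum.elim_inl, SimpleGraph.comap_adj]
      constructor
      · intro hadj; exact absurd hadj (hXX _ _)
      · intro hadj; simp [Ktt] at hadj
    · simp only [e, Sum.elim_inl, Sum.elim_inr, SimpleGraph.comap_adj]
      constructor
      · intro _; simp [Ktt]
      · intro _
        exact all (L a) (R b) (by show t-1-(a:ℕ) < t; omega) (by show t-1-(b:ℕ) < t; omega)
    · simp only [e, Sum.elim_inl, Sum.elim_inr, SimpleGraph.comap_adj]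
      constructor
      · intro _; simp [Ktt]
      · intro _
        exact (all (L b) (R a) (by show t-1-(b:ℕ) < t; omega)
          (by show t-1-(a:ℕ) < t; omega)).symm
    · simp only [e, Sum.elim_inr, SimpleGraph.comap_adj]
      constructor
      · intro hadj; exact absurd hadj (hYY _ _)
      · intro hadj; simp [Ktt] at hadj
  · right
    have all' : ∀ (x : Fin m) (y : Fin n), (x:ℕ) < t → (y:ℕ) < t →
        ¬((x:ℕ) = t-1 ∧ (y:ℕ) = t-1) → G.Adj (Sum.inl x) (Sum.inr y) := by
      intro x y hx hy hne
      apply key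
      omega
    have KMadj : ∀ a b : Fin t, (KttMinusE t).Adj (Sum.inl a) (Sum.inr b) ↔
        ¬(a = ⟨0, hpos⟩ ∧ b = ⟨0, hpos⟩) := by
      intro a b
      simp only [KttMinusE, SimpleGraph.deleteEdges_adj, Set.mem_setOf_eq, not_exists]
      constructor
      · rintro ⟨_, hs⟩ ⟨rfl, rfl⟩; exact hs hpos rfl
      · intro hne
        refine ⟨by simp [Ktt], fun h0 heq => ?_⟩
        rw [Sym2.eq_iff] at heq
        rcases heq with ⟨h1, h2⟩ | ⟨h1, h2⟩
        · exact hne ⟨Sum.inl.inj h1, Sum.inr.inj h2⟩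
        · exact (Sum.inl_ne_inr h1).elim
    have KMadj2 : ∀ a b : Fin t, (KttMinusE t).Adj (Sum.inr a) (Sum.inl b) ↔
        ¬(b = ⟨0, hpos⟩ ∧ a = ⟨0, hpos⟩) := by
      intro a b
      rw [SimpleGraph.adj_comm]
      exact KMadj b a
    have KMno1 : ∀ a b : Fin t, ¬ (KttMinusE t).Adj (Sum.inl a) (Sum.inl b) := by
      intro a b hadj
      simp only [KttMinusE, SimpleGraph.deleteEdges_adj] at hadj
      have h2 := hadj.1
      simp [Ktt] at h2
    have KMno2 : ∀ a b : Fin t, ¬ (KttMinusE t).Adj (Sum.inr a) (Sum.inr b) := by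
      intro a b hadj
      simp only [KttMinusE, SimpleGraph.deleteEdges_adj] at hadj
      have h2 := hadj.1
      simp [Ktt] at h2
    have hadj_iff : ∀ (a b : Fin t),
        G.Adj (Sum.inl (L a)) (Sum.inr (R b)) ↔ ¬(a = ⟨0, hpos⟩ ∧ b = ⟨0, hpos⟩) := by
      intro a b
      constructor
      · rintro hadj ⟨rfl, rfl⟩
        exact hlast hadj
      · intro hne
        apply all' (L a) (R b) (by show t-1-(a:ℕ) < t; omega) (by show t-1-(b:ℕ) < t; omega)
        have ha := a.isLt
        have hb := b.isLt
        rintro ⟨h1, h2⟩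
        refine hne ⟨Fin.ext ?_, Fin.ext ?_⟩
        · show (a:ℕ) = 0
          have h1' : t-1-(a:ℕ) = t-1 := h1
          omega
        · show (b:ℕ) = 0
          have h2' : t-1-(b:ℕ) = t-1 := h2
          omega
    refine ⟨(SimpleGraph.Iso.symm ⟨e, @fun a b => ?_⟩ : _)⟩
    rcases a with a | a <;> rcases b with b | b
    · simp only [e, Sum.elim_inl, SimpleGraph.comap_adj]
      constructor
      · intro hadj; exact absurd hadj (hXX _ _)
      · intro hadj; exact absurd hadj (KMno1 _ _)
    · simp only [e, Sum.elim_inl, Sum.elim_inr, SimpleGraph.comap_adj]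
      exact (hadj_iff a b).trans (KMadj a b).symm
    · simp only [e, Sum.elim_inl, Sum.elim_inr, SimpleGraph.comap_adj]
      rw [SimpleGraph.adj_comm]
      exact (hadj_iff b a).trans (KMadj2 a b).symm
    · simp only [e, Sum.elim_inr, SimpleGraph.comap_adj]
      constructor
      · intro hadj; exact absurd hadj (hYY _ _)
      · intro hadj; exact absurd hadj (KMno2 _ _)
end

section
/- For any integer t ≥ 1 and any finite simple graph G, the transitivity of G is greater than or equal to t if and only if G contains a t-atom as a subgraph. -/
/-- One step of the `t`-atom construction: starting from the graph `H` on `α`,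
add an independent set `Fin r` of new vertices, a perfect matching between the new
vertices and the `r`-element subset `W = range w` of the old vertices (via the
injection `w`), and join every old vertex outside `W` to exactly one new vertex,
namely the one given by `assign`. -/
def atomStep {α : Type} (H : SimpleGraph α) {r : ℕ} (w : Fin r → α) (assign : α → Fin r) :
    SimpleGraph (α ⊕ Fin r) where
  Adj u v :=
    match u, v with
    | Sum.inl a, Sum.inl b => H.Adj a b
    | Sum.inl a, Sum.inr i => w i = a ∨ (a ∉ Set.range w ∧ assign a = i)
    | Sum.inr i, Sum.inl a => w i = a ∨ (a ∉ Set.range w ∧ assign a = i)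
    | Sum.inr _, Sum.inr _ => False
  symm := by
    constructor
    rintro (a | i) (b | j) h
    · exact H.adj_symm h
    · exact h
    · exact h
    · exact h.elim
  loopless := by
    constructor
    rintro (a | i) h
    · exact H.irrefl h
    · exact h

/-- `IsTAtom t H`: the graph `H` is a `t`-atom.  The only `1`-atom is `K₁`, the only
`2`-atom is `K₂`, and for `t ≥ 3` a `t`-atom is obtained from a `(t-1)`-atom `H` on a
vertex set of size `n` by choosing `r ∈ {1,...,n}`, an `r`-subset `W` (the range of the
injection `w`), and performing the construction `atomStep`. -/
inductive IsTAtom : ℕ → ∀ {α : Type}, SimpleGraph α → Prop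
  | one : IsTAtom 1 (⊥ : SimpleGraph (Fin 1))
  | two : IsTAtom 2 (⊤ : SimpleGraph (Fin 2))
  | step {t : ℕ} {α : Type} [Fintype α] {H : SimpleGraph α} {r : ℕ}
      (ht : 2 ≤ t) (hH : IsTAtom t H) (hr : 1 ≤ r) (hrcard : r ≤ Fintype.card α)
      (w : Fin r → α) (hw : Function.Injective w) (assign : α → Fin r) :
      IsTAtom (t + 1) (atomStep H w assign)


/-!
A transitive partition need not cover `V` to witness `t ≤ Tr(G)`: leftover vertices can be put
into the first part, so it suffices to find `t` nonempty disjoint parts, each dominating the later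
ones. Such parts transfer along injective homomorphisms, and an atom has them: its layers, newest
first. Conversely, given such parts `V₁, …, V_t`, build by induction an atom inside `V₂ ∪ ⋯ ∪ V_t`,
choose for each of its vertices a neighbour in `V₁`, and add the distinct chosen neighbours as the
new layer: every old vertex is joined to its chosen neighbour, and a section of the choice map
provides the perfect matching.
-/

open Function SimpleGraph

namespace SimpleGraph

variable {V W : Type*} {G : SimpleGraph V} {H : SimpleGraph W}

lemma Dominates.mono_left {A A' B : Finset V} (h : G.Dominates A B) (hA : A ⊆ A') :
    G.Dominates A' B := fun b hb =>
  let ⟨a, ha, hab⟩ := h b hb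
  ⟨a, hA ha, hab⟩

lemma Dominates.map {A B : Finset W} (h : H.Dominates A B) (f : Copy H G) :
    G.Dominates (A.map f.toEmbedding) (B.map f.toEmbedding) := by
  intro x hx
  obtain ⟨b, hb, rfl⟩ := Finset.mem_map.1 hx
  obtain ⟨a, ha, hab⟩ := h b hb
  exact ⟨f a, Finset.mem_map_of_mem _ ha, f.toHom.map_adj hab⟩

/-- A transitive partition without the requirement that the parts cover all vertices. -/
structure IsDominatingChain (G : SimpleGraph V) {k : ℕ} (P : Fin k → Finset V) : Prop where
  nonempty : ∀ i, (P i).Nonempty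
  pairwise_disjoint : Pairwise (Disjoint on P)
  dominates : ∀ i j, i < j → G.Dominates (P i) (P j)

variable {k : ℕ} {P : Fin k → Finset V}

lemma isTransitivePartition_iff :
    G.IsTransitivePartition P ↔ G.IsDominatingChain P ∧ ∀ v, ∃ i, v ∈ P i := by
  refine ⟨fun ⟨hne, huniq, hdom⟩ => ⟨⟨hne, fun i j hij => ?_, hdom⟩, fun v => (huniq v).exists⟩,
    fun ⟨hP, hcover⟩ => ⟨hP.nonempty, fun v => ?_, hP.dominates⟩⟩
  · exact Finset.disjoint_left.2 fun v hvi hvj => hij ((huniq v).unique hvi hvj)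
  · obtain ⟨i, hi⟩ := hcover v
    refine ⟨i, hi, fun j hj => ?_⟩
    by_contra hji
    exact Finset.disjoint_left.1 (hP.pairwise_disjoint hji) hj hi

lemma IsDominatingChain.comp (hP : G.IsDominatingChain P) {m : ℕ} {e : Fin m → Fin k}
    (he : StrictMono e) : G.IsDominatingChain (P ∘ e) :=
  ⟨fun i => hP.nonempty (e i), hP.pairwise_disjoint.comp_of_injective he.injective,
    fun _ _ hij => hP.dominates _ _ (he hij)⟩

lemma IsDominatingChain.map {P : Fin k → Finset W} (hP : H.IsDominatingChain P) (f : Copy H G) :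
    G.IsDominatingChain fun i => (P i).map f.toEmbedding :=
  ⟨fun i => (hP.nonempty i).map,
    fun _ _ hij => (Finset.disjoint_map _).2 (hP.pairwise_disjoint hij),
    fun i j hij => (hP.dominates i j hij).map f⟩

lemma IsDominatingChain.cons (hP : G.IsDominatingChain P) {S : Finset V} (hS : S.Nonempty)
    (hdisj : ∀ i, Disjoint S (P i)) (hdom : ∀ i, G.Dominates S (P i)) :
    G.IsDominatingChain (Fin.cons S P : Fin (k + 1) → Finset V) := by
  let Q : Fin (k + 1) → Finset V := Fin.cons S P
  have cons_lt {R : Finset V → Finset V → Prop} (hS : ∀ j, R S (P j))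
      (hP : ∀ i j, i < j → R (P i) (P j)) (i j : Fin (k + 1)) (hij : i < j) :
      R (Q i) (Q j) := by
    induction j using Fin.cases with
    | zero => exact absurd hij (Fin.not_lt_zero i)
    | succ j =>
      induction i using Fin.cases with
      | zero => exact hS j
      | succ i => exact hP i j (Fin.succ_lt_succ_iff.1 hij)
  exact ⟨Fin.forall_fin_succ.2 ⟨hS, hP.nonempty⟩,
    (Std.Symm.pairwise_on _).2 (cons_lt hdisj fun i j hij => hP.pairwise_disjoint hij.ne),
    cons_lt hdom hP.dominates⟩

lemma IsDominatingChain.card_le [Fintype V] (hP : G.IsDominatingChain P) : k ≤ Fintype.card V := by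
  choose v hv using hP.nonempty
  have hinj : Injective v := fun i j hij => by
    by_contra hne
    exact Finset.disjoint_left.1 (hP.pairwise_disjoint hne) (hv i) (hij ▸ hv j)
  simpa using Fintype.card_le_of_injective v hinj

/-- The vertices outside the later parts are added to the first one. -/
lemma IsDominatingChain.exists_isTransitivePartition [Fintype V] {P : Fin (k + 1) → Finset V}
    (hP : G.IsDominatingChain P) : ∃ Q : Fin (k + 1) → Finset V, G.IsTransitivePartition Q := by
  classical
  set S := Finset.univ \ Finset.univ.biUnion (P ∘ Fin.succ)
  have hPS : P 0 ⊆ S := fun v hv => by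
    simp only [S, Finset.mem_sdiff, Finset.mem_univ, Finset.mem_biUnion, comp_apply, true_and,
      not_exists]
    exact fun i hi => Finset.disjoint_left.1 (hP.pairwise_disjoint (Fin.succ_ne_zero i).symm) hv hi
  refine ⟨Fin.cons S (P ∘ Fin.succ), isTransitivePartition_iff.2 ⟨?_, fun v => ?_⟩⟩
  · refine (hP.comp Fin.strictMono_succ).cons ((hP.nonempty 0).mono hPS) (fun i => ?_) fun i =>
      (hP.dominates 0 i.succ i.succ_pos).mono_left hPS
    exact Finset.disjoint_left.2 fun v hv hvi => (Finset.mem_sdiff.1 hv).2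
      (Finset.mem_biUnion.2 ⟨i, Finset.mem_univ _, hvi⟩)
  · by_cases hv : v ∈ S
    · exact ⟨0, hv⟩
    · obtain ⟨i, hi⟩ : ∃ i : Fin k, v ∈ P i.succ := by simpa [S] using hv
      exact ⟨i.succ, hi⟩

lemma le_transitivity_iff [Fintype V] {t : ℕ} :
    t ≤ G.transitivity ↔ ∃ P : Fin t → Finset V, G.IsDominatingChain P := by
  have hbdd : BddAbove {k | ∃ P : Fin k → Finset V, G.IsTransitivePartition P} :=
    ⟨Fintype.card V, fun k ⟨P, hP⟩ => (isTransitivePartition_iff.1 hP).1.card_le⟩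
  constructor
  · intro ht
    obtain rfl | ht0 := t.eq_zero_or_pos
    · exact ⟨finZeroElim, finZeroElim, fun i => i.elim0, fun i => i.elim0⟩
    have hne : {k | ∃ P : Fin k → Finset V, G.IsTransitivePartition P}.Nonempty :=
      Set.nonempty_iff_ne_empty.2 fun h => by
        rw [transitivity, h, csSup_empty, Nat.bot_eq_zero] at ht
        omega
    obtain ⟨P, hP⟩ := Nat.sSup_mem hne hbdd
    exact ⟨_, (isTransitivePartition_iff.1 hP).1.comp (Fin.strictMono_castLE ht)⟩
  · rintro ⟨P, hP⟩
    cases t with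
    | zero => exact Nat.zero_le _
    | succ t =>
      obtain ⟨Q, hQ⟩ := hP.exists_isTransitivePartition
      exact le_csSup hbdd ⟨Q, hQ⟩

lemma isTransitivePartition_singleton {k : ℕ} {G : SimpleGraph (Fin k)}
    (h : ∀ i j : Fin k, i < j → G.Adj i j) : G.IsTransitivePartition fun i => {i} :=
  ⟨Finset.singleton_nonempty,
    fun v => ⟨v, Finset.mem_singleton_self v, fun _ hj => (Finset.mem_singleton.1 hj).symm⟩,
    fun i j hij _ hb => ⟨i, Finset.mem_singleton_self i, Finset.mem_singleton.1 hb ▸ h i j hij⟩⟩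

def Adj.toCopy {a b : V} (h : G.Adj a b) : Copy (⊤ : SimpleGraph (Fin 2)) G :=
  ⟨⟨![a, b], fun {i j} hij => by fin_cases i <;> fin_cases j <;> simp_all [h.symm]⟩, by
    intro i j hij; fin_cases i <;> fin_cases j <;> simp_all [h.ne, h.ne.symm]⟩

end SimpleGraph

lemma containsSubgraph_iff_isContained {α β : Type*} {H : SimpleGraph α} {G : SimpleGraph β} :
    ContainsSubgraph H G ↔ H ⊑ G :=
  ⟨fun ⟨f, hf, hadj⟩ => ⟨⟨⟨f, hadj _ _⟩, hf⟩⟩,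
    fun ⟨f⟩ => ⟨f, f.injective, fun _ _ => f.toHom.map_adj⟩⟩

namespace atomStep

variable {α : Type} {H : SimpleGraph α} {r : ℕ} {w : Fin r → α} {assign : α → Fin r}

variable (H w assign) in
def inlCopy : Copy H (atomStep H w assign) := ⟨⟨Sum.inl, id⟩, Sum.inl_injective⟩

lemma exists_adj_inr (a : α) : ∃ i, (atomStep H w assign).Adj (.inr i) (.inl a) := by
  by_cases ha : a ∈ Set.range w
  · obtain ⟨i, rfl⟩ := ha
    exact ⟨i, Or.inl rfl⟩
  · exact ⟨assign a, Or.inr ⟨ha, rfl⟩⟩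

lemma assign_eq_of_adj (hw : ∀ i, assign (w i) = i) {a : α} {i : Fin r}
    (h : (atomStep H w assign).Adj (.inl a) (.inr i)) : assign a = i := by
  rcases h with rfl | ⟨-, rfl⟩
  · exact hw i
  · rfl

def lift {V : Type*} {G : SimpleGraph V} (f : H →g G) (g : Fin r → V)
    (hw : ∀ i, assign (w i) = i) (hadj : ∀ a, G.Adj (g (assign a)) (f a)) :
    atomStep H w assign →g G where
  toFun := Sum.elim f g
  map_rel' := by
    rintro (a | i) (b | j) h
    · exact f.map_adj h
    · exact (assign_eq_of_adj hw h ▸ hadj a).symm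
    · exact assign_eq_of_adj hw h.symm ▸ hadj b
    · exact h.elim

end atomStep

namespace IsTAtom

variable {t : ℕ} {α : Type} {H : SimpleGraph α}

lemma finite (h : IsTAtom t H) : Finite α := by
  induction h <;> infer_instance

lemma nonempty (h : IsTAtom t H) : Nonempty α := by
  induction h <;> infer_instance

lemma exists_isTransitivePartition (h : IsTAtom t H) :
    ∃ P : Fin t → Finset α, H.IsTransitivePartition P := by
  induction h with
  | one =>
    exact ⟨_, isTransitivePartition_singleton fun i j hij => (hij.ne (Subsingleton.elim i j)).elim⟩
  | two => exact ⟨_, isTransitivePartition_singleton fun i j hij => hij.ne⟩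
  | @step t α _ H r _ _ hr _ w _ assign ih =>
    obtain ⟨P, hP⟩ := ih
    obtain ⟨hchain, hcover⟩ := isTransitivePartition_iff.1 hP
    have : Nonempty (Fin r) := ⟨⟨0, hr⟩⟩
    refine ⟨_, isTransitivePartition_iff.2 ⟨(hchain.map (atomStep.inlCopy H w assign)).cons
      (S := Finset.univ.map .inr) Finset.univ_nonempty.map
      (fun _ => (Finset.disjoint_map_inl_map_inr _ _).symm) fun _ x hx => ?_, ?_⟩⟩
    · obtain ⟨a, -, rfl⟩ := Finset.mem_map.1 hx
      obtain ⟨k, hk⟩ := atomStep.exists_adj_inr (w := w) (assign := assign) a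
      exact ⟨.inr k, Finset.mem_map_of_mem _ (Finset.mem_univ k), hk⟩
    · rintro (a | k)
      · obtain ⟨i, hi⟩ := hcover a
        exact ⟨i.succ, Finset.mem_map_of_mem _ hi⟩
      · exact ⟨0, Finset.mem_map_of_mem _ (Finset.mem_univ k)⟩

/-- The new vertices are the distinct chosen neighbours `g a`; `assign` sends `a` to `g a`, and a
section of `assign` gives the perfect matching. -/
lemma exists_succ_copy {V : Type*} {G : SimpleGraph V} (hH : IsTAtom t H) (ht : 2 ≤ t)
    (f : Copy H G) {S : Finset V} (hS : ∀ a, f a ∉ S) (hdom : ∀ a, ∃ v ∈ S, G.Adj v (f a)) :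
    ∃ (β : Type) (H' : SimpleGraph β) (F : Copy H' G), IsTAtom (t + 1) H' ∧
      ∀ b, F b ∈ S ∨ F b ∈ Set.range f := by
  classical
  have := hH.finite
  have := hH.nonempty
  let _ := Fintype.ofFinite α
  choose g hgS hg using hdom
  let T := Finset.univ.image g
  let e := T.equivFin
  let assign : α → Fin T.card := fun a => e ⟨g a, Finset.mem_image_of_mem g (Finset.mem_univ a)⟩
  have he : ∀ i, ∃ a, g a = e.symm i := fun i =>
    let ⟨a, _, ha⟩ := Finset.mem_image.1 (e.symm i).2
    ⟨a, ha⟩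
  have hT : ∀ i, (e.symm i : V) ∈ S := fun i =>
    let ⟨b, hb⟩ := he i
    hb ▸ hgS b
  have hassign : Surjective assign := fun i => by
    obtain ⟨a, ha⟩ := he i
    exact ⟨a, by simp [assign, ha]⟩
  have hw : ∀ i, assign (surjInv hassign i) = i := surjInv_eq hassign
  let F := atomStep.lift f.toHom (fun i => (e.symm i : V)) hw fun a => by simpa [assign] using hg a
  have hF : Injective F := f.injective.sumElim (Subtype.val_injective.comp e.symm.injective)
    fun a i hai => hS a (hai ▸ hT i)
  refine ⟨_, _, ⟨F, hF⟩, .step ht hH (Finset.card_pos.2 (Finset.univ_nonempty.image g))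
    (by simpa using Fintype.card_le_of_surjective assign hassign) _ (injective_surjInv hassign)
    assign, ?_⟩
  rintro (a | i)
  · exact Or.inr ⟨a, rfl⟩
  · exact Or.inl (hT i)

end IsTAtom

lemma SimpleGraph.IsDominatingChain.exists_isTAtom_copy {V : Type*} {G : SimpleGraph V} {t : ℕ}
    (ht : 1 ≤ t) {P : Fin t → Finset V} (hP : G.IsDominatingChain P) :
    ∃ (α : Type) (H : SimpleGraph α) (f : Copy H G), IsTAtom t H ∧ ∀ a, ∃ i, f a ∈ P i := by
  induction t, ht using Nat.le_induction with
  | base =>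
    obtain ⟨v, hv⟩ := hP.nonempty 0
    exact ⟨Fin 1, ⊥, Copy.bot ⟨fun _ => v, injective_of_subsingleton _⟩, .one, fun _ => ⟨0, hv⟩⟩
  | succ t ht ih =>
    obtain rfl | ht := ht.eq_or_lt
    · obtain ⟨b, hb⟩ := hP.nonempty 1
      obtain ⟨a, ha, hab⟩ := hP.dominates 0 1 Fin.zero_lt_one b hb
      exact ⟨Fin 2, ⊤, hab.toCopy, .two, fun i => ⟨i, by fin_cases i <;> assumption⟩⟩
    obtain ⟨α, H, f, hH, hf⟩ := ih (hP.comp Fin.strictMono_succ)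
    have hf0 : ∀ a, f a ∉ P 0 := fun a h0 =>
      let ⟨i, hi⟩ := hf a
      Finset.disjoint_left.1 (hP.pairwise_disjoint (Fin.succ_ne_zero i).symm) h0 hi
    obtain ⟨β, H', F, hH', hF⟩ := hH.exists_succ_copy ht f hf0 fun a =>
      let ⟨i, hi⟩ := hf a
      hP.dominates 0 i.succ i.succ_pos _ hi
    refine ⟨β, H', F, hH', fun b => ?_⟩
    rcases hF b with h | ⟨a, ha⟩
    · exact ⟨0, h⟩
    · obtain ⟨i, hi⟩ := hf a
      exact ⟨i.succ, ha ▸ hi⟩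

/-- For any integer `t ≥ 1` and any finite simple graph `G`, `Tr(G) ≥ t` if and
only if `G` contains a `t`-atom as a subgraph. -/
theorem transitivity_ge_iff_contains_atom {V : Type} [Fintype V] (G : SimpleGraph V)
    (t : ℕ) (ht : 1 ≤ t) :
    t ≤ G.transitivity ↔
      ∃ (α : Type) (H : SimpleGraph α), IsTAtom t H ∧ ContainsSubgraph H G := by
  simp only [le_transitivity_iff, containsSubgraph_iff_isContained]
  constructor
  · rintro ⟨P, hP⟩
    obtain ⟨α, H, f, hH, -⟩ := hP.exists_isTAtom_copy ht
    exact ⟨α, H, hH, ⟨f⟩⟩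
  · rintro ⟨α, H, hH, ⟨f⟩⟩
    obtain ⟨P, hP⟩ := hH.exists_isTransitivePartition
    exact ⟨_, (isTransitivePartition_iff.1 hP).1.map f⟩
end

section
/- For every integer t ≥ 1, every t-atom H satisfies Tr(H) ≥ t. -/
/-!
Every old vertex of an atom step is adjacent to a new vertex, and the old vertices induce
the previous atom. So by induction a `t`-atom has a transitive `t`-partition: the new
vertices form the first class, followed by the classes of the previous atom's partition.
Since classes are nonempty and disjoint, every transitive `k`-partition has `k ≤ |V|`; this
boundedness is what makes the `sSup` defining `Tr` meaningful (an unbounded `sSup` in `ℕ` is `0`).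
-/

namespace SimpleGraph

variable {V : Type*} {G : SimpleGraph V} {k : ℕ} {P : Fin k → Finset V}

theorem IsTransitivePartition.le_card [Fintype V] (hP : G.IsTransitivePartition P) :
    k ≤ Fintype.card V := by
  choose f hf using hP.1
  have hf_inj : Function.Injective f := fun i j hij =>
    (hP.2.1 (f i)).unique (hf i) (hij ▸ hf j)
  simpa using Fintype.card_le_of_injective f hf_inj

theorem IsTransitivePartition.le_transitivity [Fintype V] (hP : G.IsTransitivePartition P) :
    k ≤ G.transitivity :=
  le_csSup ⟨Fintype.card V, fun _ ⟨_, hQ⟩ => hQ.le_card⟩ ⟨P, hP⟩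

theorem isTransitivePartition_univ [Nonempty V] [Fintype V] :
    G.IsTransitivePartition fun _ : Fin 1 => (Finset.univ : Finset V) :=
  ⟨fun _ => Finset.univ_nonempty, fun _ => ⟨0, Finset.mem_univ _, fun _ _ => Subsingleton.elim _ _⟩,
    fun i j hij => absurd hij (Subsingleton.elim i j ▸ lt_irrefl i)⟩

theorem top_isTransitivePartition_singleton (n : ℕ) :
    (⊤ : SimpleGraph (Fin n)).IsTransitivePartition fun i => {i} :=
  ⟨fun i => Finset.singleton_nonempty i,
    fun v => ⟨v, Finset.mem_singleton_self v, fun _ hj => (Finset.mem_singleton.mp hj).symm⟩,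
    fun i _ hij b hb => ⟨i, Finset.mem_singleton_self i, by
      rw [Finset.mem_singleton.mp hb]; exact hij.ne⟩⟩

theorem IsTransitivePartition.cons {α β : Type*} [Fintype β] [Nonempty β]
    {G : SimpleGraph (α ⊕ β)} {P : Fin k → Finset α}
    (hP : (G.comap Sum.inl).IsTransitivePartition P)
    (hdom : ∀ a, ∃ b, G.Adj (Sum.inr b) (Sum.inl a)) :
    G.IsTransitivePartition
      (Fin.cons (Finset.univ.map .inr) fun i => (P i).map .inl : Fin (k + 1) → Finset (α ⊕ β)) := by
  refine ⟨Fin.cases (by simp) fun i => by simpa using hP.1 i, ?_, ?_⟩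
  · rintro (a | b)
    · obtain ⟨i, hi, huniq⟩ := hP.2.1 a
      refine ⟨i.succ, by simpa using hi, Fin.cases (by simp) fun j hj => ?_⟩
      rw [huniq j (by simpa using hj)]
    · exact ⟨0, by simp, Fin.cases (fun _ => rfl) fun j hj => by simp at hj⟩
  · intro i j hij
    induction j using Fin.cases with
    | zero => exact absurd hij (Fin.not_lt_zero i)
    | succ j =>
      induction i using Fin.cases with
      | zero =>
        intro v hv
        obtain ⟨a, -, rfl⟩ := Finset.mem_map.mp hv
        obtain ⟨b, hb⟩ := hdom a
        exact ⟨.inr b, by simp, hb⟩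
      | succ i =>
        intro v hv
        obtain ⟨a, ha, rfl⟩ := Finset.mem_map.mp hv
        obtain ⟨a', ha', hadj⟩ := hP.2.2 i j (Fin.succ_lt_succ_iff.mp hij) a ha
        exact ⟨.inl a', by simpa using ha', hadj⟩

end SimpleGraph

theorem atomStep_exists_adj_inr {α : Type} {H : SimpleGraph α} {r : ℕ} {w : Fin r → α}
    {assign : α → Fin r} (a : α) : ∃ i, (atomStep H w assign).Adj (.inr i) (.inl a) := by
  by_cases ha : a ∈ Set.range w
  · obtain ⟨i, hi⟩ := ha
    exact ⟨i, Or.inl hi⟩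
  · exact ⟨assign a, Or.inr ⟨ha, rfl⟩⟩

theorem IsTAtom.exists_isTransitivePartition_s9 {t : ℕ} {α : Type} {H : SimpleGraph α}
    (hH : IsTAtom t H) : ∃ P : Fin t → Finset α, H.IsTransitivePartition P := by
  induction hH with
  | one => exact ⟨_, SimpleGraph.isTransitivePartition_univ⟩
  | two => exact ⟨_, SimpleGraph.top_isTransitivePartition_singleton 2⟩
  | step _ _ hr _ _ _ _ ih =>
    obtain ⟨P, hP⟩ := ih
    have : Nonempty (Fin _) := ⟨⟨0, hr⟩⟩
    exact ⟨_, SimpleGraph.IsTransitivePartition.cons (G := atomStep ..) hP atomStep_exists_adj_inr⟩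

theorem atom_transitivity_ge_general (t : ℕ) {α : Type} [Fintype α]
    (H : SimpleGraph α) (hH : IsTAtom t H) : t ≤ H.transitivity := by
  obtain ⟨P, hP⟩ := hH.exists_isTransitivePartition_s9
  exact hP.le_transitivity

/-- For every integer `t ≥ 1`, every `t`-atom `H` satisfies `Tr(H) ≥ t`. -/
theorem atom_transitivity_ge (t : ℕ) (ht : 1 ≤ t) {α : Type} [Fintype α]
    (H : SimpleGraph α) (hH : IsTAtom t H) : t ≤ H.transitivity :=
  atom_transitivity_ge_general t H hH
end

section
/- Let G=(V,E) be a finite simple graph with V={v_1,...,v_n} and E={e_1,...,e_m}, and let G' be the graph constructed from G as described in the context. If G has a proper 3-coloring, then G' has a transitive (m+5)-partition. -/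
/-- Vertices of the graph `G'` constructed from a graph `G` with `n` vertices and `m`
enumerated edges.  The `Bool` flag distinguishes the unprimed (`false`) and primed
(`true`) copies of each gadget.
* `vpath b i p` : vertex number `p` of the path `P_{v_i}` (resp. `P'_{v_i}`), where
  positions `0,1,2,3` are `x_i, w_i, v_i, z_i`;
* `epath b j p` : vertex number `p` of the path `P_{e_j}` (resp. `P'_{e_j}`);
* `spath b s p` : vertex number `p` of the special path `P_a`/`P_b`/`P_e`
  (for `s = 0,1,2`) resp. its primed copy;
* `core b (some j)` : the vertex `e_j` of `A` (for `b = false`) resp. `e'_j` of `B`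
  (for `b = true`);
* `core b none` : the vertex `e` of `A` resp. `e'` of `B`. -/
inductive GadgetVert (n m : ℕ) : Type
  | vpath : Bool → Fin n → Fin 4 → GadgetVert n m
  | epath : Bool → Fin m → Fin 4 → GadgetVert n m
  | spath : Bool → Fin 3 → Fin 4 → GadgetVert n m
  | core : Bool → Option (Fin m) → GadgetVert n m
  deriving DecidableEq, Fintype

/-- The base (asymmetric) adjacency relation of the construction, given the edge
enumeration `ends : Fin m → Fin n × Fin n` of `G`. -/
def gadgetRel {n m : ℕ} (ends : Fin m → Fin n × Fin n) :
    GadgetVert n m → GadgetVert n m → Prop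
  | .vpath b i p, .vpath b' i' p' => b = b' ∧ i = i' ∧ (p' : ℕ) = (p : ℕ) + 1
  | .epath b j p, .epath b' j' p' => b = b' ∧ j = j' ∧ (p' : ℕ) = (p : ℕ) + 1
  | .spath b s p, .spath b' s' p' => b = b' ∧ s = s' ∧ (p' : ℕ) = (p : ℕ) + 1
  | .core b _, .core b' _ => b = false ∧ b' = true
  | .vpath b i p, .core b' o =>
      b = b' ∧ p = 2 ∧ ∃ k : Fin m, o = some k ∧ ((ends k).1 = i ∨ (ends k).2 = i)
  | .epath b j p, .core b' o => b = b' ∧ p = 2 ∧ o = some j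
  | .spath b _ p, .core b' o => b = b' ∧ p = 2 ∧ o = none
  | _, _ => False

/-- The graph `G'` constructed from a graph on `Fin n` whose `m` edges are
enumerated by `ends`. -/
def gadgetGraph {n m : ℕ} (ends : Fin m → Fin n × Fin n) :
    SimpleGraph (GadgetVert n m) :=
  SimpleGraph.fromRel (gadgetRel ends)

/-- Class (in `{0,1,2}`) of position `p` on a `P4` gadget whose central vertex
(position 2) has class `c`. -/
def pathAssign (c : Fin 3) : Fin 4 → Fin 3 :=
  ![0, if c = 1 then 0 else 1, c, if c = 0 then 1 else 0]

lemma pathAssign_two : ∀ c : Fin 3, pathAssign c 2 = c := by decide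

lemma pathAssign_dom : ∀ (c : Fin 3) (p : Fin 4) (i : Fin 3), i < pathAssign c p →
    ∃ p' : Fin 4, pathAssign c p' = i ∧ (((p' : ℕ) + 1 = p) ∨ ((p : ℕ) + 1 = p')) := by
  decide

/-- The third colour, different from two distinct colours `a` and `b`. -/
def thirdColor (a b : Fin 3) : Fin 3 := -(a + b)

lemma thirdColor_cover : ∀ a b : Fin 3, a ≠ b → ∀ i : Fin 3,
    i = a ∨ i = b ∨ i = thirdColor a b := by decide

/-- The class of each vertex of the gadget graph. -/
def gadgetClass {n m : ℕ} (ends : Fin m → Fin n × Fin n) (g : Fin n → Fin 3) :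
    GadgetVert n m → Fin (m + 5)
  | .vpath _ i p => (pathAssign (g i) p).castLE (by omega)
  | .epath _ j p => (pathAssign (thirdColor (g (ends j).1) (g (ends j).2)) p).castLE (by omega)
  | .spath _ s p => (pathAssign s p).castLE (by omega)
  | .core _ (some k) => ⟨3 + (k : ℕ), by omega⟩
  | .core false none => ⟨m + 3, by omega⟩
  | .core true none => ⟨m + 4, by omega⟩

lemma path_adj_aux {n m : ℕ} (ends : Fin m → Fin n × Fin n)
    (pb : Fin 4 → GadgetVert n m)
    (hrel : ∀ p p' : Fin 4, ((p' : ℕ) = (p : ℕ) + 1) → gadgetRel ends (pb p) (pb p'))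
    (hpinj : Function.Injective pb)
    (p p' : Fin 4) (h : ((p' : ℕ) + 1 = p) ∨ ((p : ℕ) + 1 = p')) :
    (gadgetGraph ends).Adj (pb p') (pb p) := by
  have hne : p' ≠ p := by rcases h with h | h <;> (intro e; subst e; omega)
  refine (SimpleGraph.fromRel_adj _ _ _).mpr ⟨fun e => hne (hpinj e), ?_⟩
  rcases h with h | h
  · exact Or.inl (hrel p' p h.symm)
  · exact Or.inr (hrel p p' h.symm)

/-- If `G` (a graph on `n` vertices whose edge set is exactly enumerated, without
repetition, by `ends : Fin m → Fin n × Fin n`) has a proper 3-coloring, then the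
constructed graph `G'` has a transitive `(m+5)`-partition. -/
theorem gadget_transitive_of_coloring {n m : ℕ} (G : SimpleGraph (Fin n))
    (ends : Fin m → Fin n × Fin n)
    (hends : ∀ a b : Fin n, G.Adj a b ↔ ∃ j : Fin m, s(a, b) = s((ends j).1, (ends j).2))
    (hinj : Function.Injective fun j : Fin m => s((ends j).1, (ends j).2))
    (hcol : ∃ g : Fin n → Fin 3, ∀ a b : Fin n, G.Adj a b → g a ≠ g b) :
    ∃ P : Fin (m + 5) → Finset (GadgetVert n m),
      (gadgetGraph ends).IsTransitivePartition P := by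
  classical
  obtain ⟨g, hg⟩ := hcol
  have h35 : (3 : ℕ) ≤ m + 5 := by omega
  refine ⟨fun i => Finset.univ.filter (fun v => gadgetClass ends g v = i), ?_, ?_, ?_⟩
  · -- nonempty
    intro i
    rcases lt_or_ge (i : ℕ) 3 with h | h
    · refine ⟨.spath false ⟨i, h⟩ 2, Finset.mem_filter.mpr ⟨Finset.mem_univ _, ?_⟩⟩
      show Fin.castLE h35 (pathAssign ⟨i, h⟩ 2) = i
      rw [pathAssign_two]; exact Fin.ext rfl
    · rcases lt_or_ge (i : ℕ) (m + 3) with h2 | h2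
      · refine ⟨.core false (some ⟨(i : ℕ) - 3, by omega⟩),
          Finset.mem_filter.mpr ⟨Finset.mem_univ _, ?_⟩⟩
        exact Fin.ext (by show 3 + ((i : ℕ) - 3) = (i : ℕ); omega)
      · rcases eq_or_lt_of_le h2 with h3 | h3
        · refine ⟨.core false none, Finset.mem_filter.mpr ⟨Finset.mem_univ _, ?_⟩⟩
          exact Fin.ext (by show m + 3 = (i : ℕ); omega)
        · refine ⟨.core true none, Finset.mem_filter.mpr ⟨Finset.mem_univ _, ?_⟩⟩
          exact Fin.ext (by show m + 4 = (i : ℕ); have := i.isLt; omega)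
  · -- partition
    intro v
    refine ⟨gadgetClass ends g v, Finset.mem_filter.mpr ⟨Finset.mem_univ _, rfl⟩, ?_⟩
    intro j hj
    exact ((Finset.mem_filter.mp hj).2).symm
  · -- domination
    intro i j hij v hv
    obtain ⟨-, hv⟩ := Finset.mem_filter.mp hv
    subst hv
    have key : ∀ (c : Fin 3) (p : Fin 4), (i : ℕ) < ((pathAssign c p : Fin 3) : ℕ) →
        ∃ p' : Fin 4, (Fin.castLE h35 (pathAssign c p') = i) ∧
          (((p' : ℕ) + 1 = p) ∨ ((p : ℕ) + 1 = p')) := by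
      intro c p hlt
      have hi3 : (i : ℕ) < 3 := lt_trans hlt (pathAssign c p).isLt
      obtain ⟨p', h1, h2⟩ := pathAssign_dom c p ⟨i, hi3⟩ hlt
      exact ⟨p', by rw [h1]; exact Fin.ext rfl, h2⟩
    cases v with
    | vpath b ii p =>
        obtain ⟨p', h1, h2⟩ := key (g ii) p hij
        exact ⟨.vpath b ii p', Finset.mem_filter.mpr ⟨Finset.mem_univ _, h1⟩,
          path_adj_aux ends (fun q => .vpath b ii q) (fun q q' hq => ⟨rfl, rfl, hq⟩)
            (fun a a' h => by simpa using h) p p' h2⟩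
    | epath b jj p =>
        obtain ⟨p', h1, h2⟩ := key (thirdColor (g (ends jj).1) (g (ends jj).2)) p hij
        exact ⟨.epath b jj p', Finset.mem_filter.mpr ⟨Finset.mem_univ _, h1⟩,
          path_adj_aux ends (fun q => .epath b jj q) (fun q q' hq => ⟨rfl, rfl, hq⟩)
            (fun a a' h => by simpa using h) p p' h2⟩
    | spath b s p =>
        obtain ⟨p', h1, h2⟩ := key s p hij
        exact ⟨.spath b s p', Finset.mem_filter.mpr ⟨Finset.mem_univ _, h1⟩,
          path_adj_aux ends (fun q => .spath b s q) (fun q q' hq => ⟨rfl, rfl, hq⟩)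
            (fun a a' h => by simpa using h) p p' h2⟩
    | core b o =>
        cases o with
        | some k =>
            have hijn : (i : ℕ) < 3 + (k : ℕ) := by cases b <;> exact hij
            rcases lt_or_ge (i : ℕ) 3 with h3 | h3
            · -- neighbour among the three central path vertices
              have hadj : G.Adj (ends k).1 (ends k).2 := (hends _ _).mpr ⟨k, rfl⟩
              have hgk := hg _ _ hadj
              rcases thirdColor_cover _ _ hgk ⟨i, h3⟩ with h | h | h
              · refine ⟨.vpath b (ends k).1 2,
                  Finset.mem_filter.mpr ⟨Finset.mem_univ _, ?_⟩, ?_⟩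
                · show Fin.castLE h35 (pathAssign (g (ends k).1) 2) = i
                  rw [pathAssign_two, ← h]; exact Fin.ext rfl
                · exact (SimpleGraph.fromRel_adj _ _ _).mpr ⟨by simp,
                    Or.inl ⟨rfl, rfl, k, rfl, Or.inl rfl⟩⟩
              · refine ⟨.vpath b (ends k).2 2,
                  Finset.mem_filter.mpr ⟨Finset.mem_univ _, ?_⟩, ?_⟩
                · show Fin.castLE h35 (pathAssign (g (ends k).2) 2) = i
                  rw [pathAssign_two, ← h]; exact Fin.ext rfl
                · exact (SimpleGraph.fromRel_adj _ _ _).mpr ⟨by simp,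
                    Or.inl ⟨rfl, rfl, k, rfl, Or.inr rfl⟩⟩
              · refine ⟨.epath b k 2,
                  Finset.mem_filter.mpr ⟨Finset.mem_univ _, ?_⟩, ?_⟩
                · show Fin.castLE h35 (pathAssign (thirdColor (g (ends k).1) (g (ends k).2)) 2) = i
                  rw [pathAssign_two, ← h]; exact Fin.ext rfl
                · exact (SimpleGraph.fromRel_adj _ _ _).mpr ⟨by simp,
                    Or.inl ⟨rfl, rfl, rfl⟩⟩
            · -- neighbour among earlier core pairs
              have hk : (i : ℕ) - 3 < m := by have := k.isLt; omega
              cases b with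
              | false =>
                  refine ⟨.core true (some ⟨(i : ℕ) - 3, hk⟩),
                    Finset.mem_filter.mpr ⟨Finset.mem_univ _, ?_⟩, ?_⟩
                  · exact Fin.ext (by show 3 + ((i : ℕ) - 3) = (i : ℕ); omega)
                  · exact (SimpleGraph.fromRel_adj _ _ _).mpr ⟨by simp, Or.inr ⟨rfl, rfl⟩⟩
              | true =>
                  refine ⟨.core false (some ⟨(i : ℕ) - 3, hk⟩),
                    Finset.mem_filter.mpr ⟨Finset.mem_univ _, ?_⟩, ?_⟩
                  · exact Fin.ext (by show 3 + ((i : ℕ) - 3) = (i : ℕ); omega)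
                  · exact (SimpleGraph.fromRel_adj _ _ _).mpr ⟨by simp, Or.inl ⟨rfl, rfl⟩⟩
        | none =>
            cases b with
            | false =>
                have hijn : (i : ℕ) < m + 3 := hij
                rcases lt_or_ge (i : ℕ) 3 with h3 | h3
                · refine ⟨.spath false ⟨i, h3⟩ 2,
                    Finset.mem_filter.mpr ⟨Finset.mem_univ _, ?_⟩, ?_⟩
                  · show Fin.castLE h35 (pathAssign ⟨i, h3⟩ 2) = i
                    rw [pathAssign_two]; exact Fin.ext rfl
                  · exact (SimpleGraph.fromRel_adj _ _ _).mpr ⟨by simp,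
                      Or.inl ⟨rfl, rfl, rfl⟩⟩
                · have hk : (i : ℕ) - 3 < m := by omega
                  refine ⟨.core true (some ⟨(i : ℕ) - 3, hk⟩),
                    Finset.mem_filter.mpr ⟨Finset.mem_univ _, ?_⟩, ?_⟩
                  · exact Fin.ext (by show 3 + ((i : ℕ) - 3) = (i : ℕ); omega)
                  · exact (SimpleGraph.fromRel_adj _ _ _).mpr ⟨by simp, Or.inr ⟨rfl, rfl⟩⟩
            | true =>
                have hijn : (i : ℕ) < m + 4 := hij
                rcases lt_or_ge (i : ℕ) 3 with h3 | h3
                · refine ⟨.spath true ⟨i, h3⟩ 2,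
                    Finset.mem_filter.mpr ⟨Finset.mem_univ _, ?_⟩, ?_⟩
                  · show Fin.castLE h35 (pathAssign ⟨i, h3⟩ 2) = i
                    rw [pathAssign_two]; exact Fin.ext rfl
                  · exact (SimpleGraph.fromRel_adj _ _ _).mpr ⟨by simp,
                      Or.inl ⟨rfl, rfl, rfl⟩⟩
                · rcases lt_or_ge (i : ℕ) (m + 3) with h4 | h4
                  · have hk : (i : ℕ) - 3 < m := by omega
                    refine ⟨.core false (some ⟨(i : ℕ) - 3, hk⟩),
                      Finset.mem_filter.mpr ⟨Finset.mem_univ _, ?_⟩, ?_⟩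
                    · exact Fin.ext (by show 3 + ((i : ℕ) - 3) = (i : ℕ); omega)
                    · exact (SimpleGraph.fromRel_adj _ _ _).mpr ⟨by simp, Or.inl ⟨rfl, rfl⟩⟩
                  · refine ⟨.core false none,
                      Finset.mem_filter.mpr ⟨Finset.mem_univ _, ?_⟩, ?_⟩
                    · exact Fin.ext (by show m + 3 = (i : ℕ); omega)
                    · exact (SimpleGraph.fromRel_adj _ _ _).mpr ⟨by simp, Or.inl ⟨rfl, rfl⟩⟩
end

section
/- Let G=(V,E) be a finite simple graph with V={v_1,...,v_n} and E={e_1,...,e_m}, and let G' be the graph constructed from G as described in the context. If G' has a transitive (m+5)-partition, then G has a proper 3-coloring. -/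
open Finset

lemma Finset.image_eq_and_injOn_of_subset_image {α β : Type*} [DecidableEq β] {f : α → β}
    {R : Finset β} {S : Finset α} (h : R ⊆ S.image f) (hcard : #S ≤ #R) :
    S.image f = R ∧ Set.InjOn f S := by
  have heq := (eq_of_subset_of_card_le h (card_image_le.trans hcard)).symm
  refine ⟨heq, card_image_iff.1 (le_antisymm card_image_le ?_)⟩
  rwa [heq]

lemma Finset.disjoint_image_of_injOn {α β : Type*} [DecidableEq α] [DecidableEq β] {f : α → β}
    {s t : Finset α} (hf : Set.InjOn f ↑(s ∪ t)) (hd : Disjoint s t) :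
    Disjoint (s.image f) (t.image f) := by
  simp only [disjoint_left, mem_image]
  rintro _ ⟨a, ha, rfl⟩ ⟨b, hb, hab⟩
  have : b = a := hf (by simp [hb]) (by simp [ha]) hab
  exact disjoint_left.1 hd ha (this ▸ hb)

namespace SimpleGraph.IsTransitivePartition

variable {V : Type*} {G : SimpleGraph V} {K : ℕ} {P : Fin K → Finset V}

noncomputable def index (hP : G.IsTransitivePartition P) (v : V) : Fin K :=
  (hP.2.1 v).exists.choose

lemma map (hP : G.IsTransitivePartition P) {W : Type*} {H : SimpleGraph W} (e : G ≃g H) :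
    H.IsTransitivePartition fun i => (P i).map e.toEquiv.toEmbedding := by
  obtain ⟨hne, huniq, hdom⟩ := hP
  refine ⟨fun i => (hne i).map,
    fun w => by simpa only [mem_map_equiv] using huniq (e.toEquiv.symm w),
    fun i j hij w hw => ?_⟩
  obtain ⟨a, ha, haw⟩ := hdom i j hij _ (mem_map_equiv.1 hw)
  refine ⟨e.toEquiv a, mem_map_equiv.2 ?_, ?_⟩
  · rwa [Equiv.symm_apply_apply]
  · have h := e.map_adj_iff.2 haw
    rwa [show e (e.toEquiv.symm w) = w from e.toEquiv.apply_symm_apply w] at h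

variable (hP : G.IsTransitivePartition P)

lemma mem_index (v : V) : v ∈ P (hP.index v) := (hP.2.1 v).exists.choose_spec

lemma index_eq_of_mem {v : V} {i : Fin K} (h : v ∈ P i) : hP.index v = i :=
  (hP.2.1 v).unique (hP.mem_index v) h

lemma exists_adj_index_eq_of_lt {v : V} {i : Fin K} (h : i < hP.index v) :
    ∃ a, G.Adj a v ∧ hP.index a = i := by
  obtain ⟨a, ha, hav⟩ := hP.2.2 i _ h v (hP.mem_index v)
  exact ⟨a, hav, hP.index_eq_of_mem ha⟩

lemma subset_image_index [DecidableEq V] {v : V} {R : Finset (Fin K)} {S : Finset V}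
    (hR : ∀ r ∈ R, ∃ a, G.Adj a v ∧ hP.index a = r)
    (hS : ∀ a, G.Adj a v → hP.index a ∈ R → a ∈ S) : R ⊆ S.image hP.index := by
  intro r hr
  obtain ⟨a, hav, rfl⟩ := hR r hr
  exact mem_image_of_mem _ (hS a hav hr)

lemma index_le_card [DecidableEq V] {v : V} {S : Finset V}
    (hS : ∀ a, G.Adj a v → hP.index a < hP.index v → a ∈ S) : (hP.index v : ℕ) ≤ #S := by
  have h := hP.subset_image_index (R := Iio (hP.index v)) (S := S)
    (fun r hr => hP.exists_adj_index_eq_of_lt (mem_Iio.1 hr))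
    (fun a hav ha => hS a hav (mem_Iio.1 ha))
  simpa using (card_le_card h).trans card_image_le

lemma image_index_eq [DecidableEq V] {v : V} {R : Finset (Fin K)} {S : Finset V}
    (hR : ∀ r ∈ R, ∃ a, G.Adj a v ∧ hP.index a = r) (hS : ∀ a, G.Adj a v → a ∈ S)
    (hcard : #S ≤ #R) : S.image hP.index = R ∧ Set.InjOn hP.index S :=
  image_eq_and_injOn_of_subset_image (hP.subset_image_index hR fun a hav _ => hS a hav) hcard

end SimpleGraph.IsTransitivePartition

lemma exists_fin_three_coloring_of_mem {α β ι : Type*} (e : ι → α × α) (f : α → β)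
    (Q : Finset β) (hQ : #Q ≤ 3) (h : ∀ k, f (e k).1 ≠ f (e k).2 ∧ f (e k).1 ∈ Q ∧ f (e k).2 ∈ Q) :
    ∃ g : α → Fin 3, ∀ k, g (e k).1 ≠ g (e k).2 := by
  classical
  let φ : Q ↪ Fin 3 := Q.equivFin.toEmbedding.trans (Fin.castLEEmb hQ)
  refine ⟨fun x => if hx : f x ∈ Q then φ ⟨f x, hx⟩ else 0, fun k => ?_⟩
  obtain ⟨hne, h1, h2⟩ := h k
  simpa only [dif_pos h1, dif_pos h2, ne_eq, φ.injective.eq_iff, Subtype.mk.injEq] using hne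

lemma exists_fin_three_coloring_of_meets {α ι : Type*} [DecidableEq α] (e : ι → α × α)
    (he : ∀ k, (e k).1 ≠ (e k).2) (p q : α)
    (h : ∀ k, ∃ x, (x = (e k).1 ∨ x = (e k).2) ∧ (x = p ∨ x = q)) :
    ∃ g : α → Fin 3, ∀ k, g (e k).1 ≠ g (e k).2 := by
  refine ⟨fun x => if x = p then 0 else if x = q then 1 else 2, fun k => ?_⟩
  obtain ⟨x, hx, hpq⟩ := h k
  have := he k
  dsimp only
  split_ifs <;> grind

namespace GadgetVert

variable {n m : ℕ} {ends : Fin m → Fin n × Fin n}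

def swap : GadgetVert n m → GadgetVert n m
  | vpath b i p => vpath (!b) i p
  | epath b j p => epath (!b) j p
  | spath b s p => spath (!b) s p
  | core b o => core (!b) o

lemma swap_swap (v : GadgetVert n m) : v.swap.swap = v := by
  cases v <;> simp [swap]

lemma swap_adj_swap {x y : GadgetVert n m} :
    (gadgetGraph ends).Adj x.swap y.swap ↔ (gadgetGraph ends).Adj x y := by
  cases x <;> cases y <;> simp [swap, gadgetGraph, gadgetRel]
  tauto

variable (ends) in
def swapIso : gadgetGraph ends ≃g gadgetGraph ends where
  toFun := swap
  invFun := swap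
  left_inv := swap_swap
  right_inv := swap_swap
  map_rel_iff' := swap_adj_swap

variable (m) in
/-- `A` for `c = false`, `B` for `c = true`. -/
def side (c : Bool) : Finset (GadgetVert n m) := univ.image (core c)

variable (ends) in
/-- The path centres adjacent to `core c o`: `v_i, v_j, v_{e_k}` for `e_k = v_i v_j`, and
`v_a, v_b, v_e` for `e`. -/
def centres (c : Bool) : Option (Fin m) → Finset (GadgetVert n m)
  | some k => {vpath c (ends k).1 2, vpath c (ends k).2 2, epath c k 2}
  | none => univ.image (spath c · 2)

variable {a y : GadgetVert n m} {b c : Bool} {o : Option (Fin m)}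

lemma core_mem_side (o : Option (Fin m)) : (core c o : GadgetVert n m) ∈ side m c :=
  mem_image_of_mem _ (mem_univ o)

lemma card_side_le : #(side m c : Finset (GadgetVert n m)) ≤ m + 1 :=
  card_image_le.trans (by simp)

lemma card_centres (hloop : ∀ k, (ends k).1 ≠ (ends k).2) (c : Bool) (o : Option (Fin m)) :
    #(centres ends c o) = 3 := by
  cases o with
  | some k => simp [centres, hloop]
  | none =>
    rw [centres, card_image_of_injective _ fun s t h => by simpa using h, card_univ,
      Fintype.card_fin]

lemma disjoint_side_centres : Disjoint (side m b) (centres ends c o) := by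
  cases o <;> simp [disjoint_left, side, centres]

lemma core_adj_core {o o' : Option (Fin m)} :
    (gadgetGraph ends).Adj (core false o) (core true o') := by
  simp [gadgetGraph, gadgetRel]

lemma adj_core_iff : (gadgetGraph ends).Adj y (core c o) ↔ y ∈ side m (!c) ∪ centres ends c o := by
  cases y <;> cases o <;> cases c <;> simp [gadgetGraph, gadgetRel, side, centres] <;> aesop

lemma mem_centres_of_adj {c' : Bool} {o' : Option (Fin m)} (hy : y ∈ centres ends c' o')
    (h : (gadgetGraph ends).Adj (core c o) y) : y ∈ centres ends c o :=
  (mem_union.1 (adj_core_iff.1 h.symm)).resolve_left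
    (disjoint_right.1 (disjoint_side_centres (c := c')) hy)

lemma adj_vpath_two {i : Fin n} (h : (gadgetGraph ends).Adj a (vpath b i 2)) :
    a = vpath b i 1 ∨ a = vpath b i 3 ∨ a ∈ side m b := by
  cases a <;> simp [gadgetGraph, gadgetRel, side, Fin.ext_iff] at h ⊢ <;> grind

lemma adj_epath_two {j : Fin m} (h : (gadgetGraph ends).Adj a (epath b j 2)) :
    a = epath b j 1 ∨ a = epath b j 3 ∨ a ∈ side m b := by
  cases a <;> simp [gadgetGraph, gadgetRel, side, Fin.ext_iff] at h ⊢ <;> grind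

lemma adj_spath_two {s : Fin 3} (h : (gadgetGraph ends).Adj a (spath b s 2)) :
    a = spath b s 1 ∨ a = spath b s 3 ∨ a ∈ side m b := by
  cases a <;> simp [gadgetGraph, gadgetRel, side, Fin.ext_iff] at h ⊢ <;> grind

lemma adj_vpath_of_ne_two {i : Fin n} {p : Fin 4} (hp : p ≠ 2)
    (h : (gadgetGraph ends).Adj a (vpath b i p)) : ∃ q, a = vpath b i q := by
  cases a <;> simp [gadgetGraph, gadgetRel, Fin.ext_iff] at h hp ⊢ <;> grind

lemma adj_epath_of_ne_two {j : Fin m} {p : Fin 4} (hp : p ≠ 2)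
    (h : (gadgetGraph ends).Adj a (epath b j p)) : ∃ q, a = epath b j q := by
  cases a <;> simp [gadgetGraph, gadgetRel, Fin.ext_iff] at h hp ⊢ <;> grind

lemma adj_spath_of_ne_two {s : Fin 3} {p : Fin 4} (hp : p ≠ 2)
    (h : (gadgetGraph ends).Adj a (spath b s p)) : ∃ q, a = spath b s q := by
  cases a <;> simp [gadgetGraph, gadgetRel, Fin.ext_iff] at h hp ⊢ <;> grind

lemma exists_adj_subset_of_mem_centres (hy : y ∈ centres ends c o) :
    ∃ w z, ∀ a, (gadgetGraph ends).Adj a y → a = w ∨ a = z ∨ a ∈ side m c := by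
  cases o with
  | some k =>
    simp only [centres, mem_insert, mem_singleton] at hy
    rcases hy with rfl | rfl | rfl
    exacts [⟨_, _, fun _ => adj_vpath_two⟩, ⟨_, _, fun _ => adj_vpath_two⟩,
      ⟨_, _, fun _ => adj_epath_two⟩]
  | none =>
    obtain ⟨s, -, rfl⟩ := mem_image.1 hy
    exact ⟨_, _, fun _ => adj_spath_two⟩

lemma exists_common_end_of_mem_centres {k k' : Fin m} (hk : k ≠ k')
    (h : y ∈ centres ends c (some k)) (h' : y ∈ centres ends c (some k')) :
    ∃ x, (x = (ends k).1 ∨ x = (ends k).2) ∧ (x = (ends k').1 ∨ x = (ends k').2) := by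
  simp only [centres, mem_insert, mem_singleton] at h h'
  rcases h with rfl | rfl | rfl <;> simp_all

variable {P : Fin (m + 5) → Finset (GadgetVert n m)}
  (hP : (gadgetGraph ends).IsTransitivePartition P)

lemma index_path_le {f : Fin 4 → GadgetVert n m} {c : Bool}
    (h2 : ∀ a, (gadgetGraph ends).Adj a (f 2) → a = f 1 ∨ a = f 3 ∨ a ∈ side m c)
    (hf : ∀ p ≠ 2, ∀ a, (gadgetGraph ends).Adj a (f p) → ∃ q, a = f q) (p : Fin 4) :
    (hP.index (f p) : ℕ) ≤ m + 3 := by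
  by_cases hp : p = 2
  · subst hp
    refine (hP.index_le_card (S := insert (f 1) (insert (f 3) (side m c)))
      fun a ha _ => ?_).trans ?_
    · rcases h2 a ha with rfl | rfl | h <;> simp [*]
    · have := card_insert_le (f 1) (insert (f 3) (side m c))
      have := card_insert_le (f 3) (side m c)
      have := card_side_le (n := n) (m := m) (c := c)
      omega
  · refine (hP.index_le_card (S := (univ.image f).erase (f p)) fun a ha _ => ?_).trans ?_
    · obtain ⟨q, rfl⟩ := hf p hp a ha
      exact mem_erase.2 ⟨ha.ne, mem_image_of_mem _ (mem_univ _)⟩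
    · rw [card_erase_of_mem (mem_image_of_mem _ (mem_univ _))]
      have := card_image_le (s := univ) (f := f)
      simp only [card_univ, Fintype.card_fin] at this
      omega

lemma exists_core_mem_last (hP : (gadgetGraph ends).IsTransitivePartition P) :
    ∃ c o, core c o ∈ P (Fin.last (m + 4)) := by
  obtain ⟨v, hv⟩ := hP.1 (Fin.last (m + 4))
  have hlast : (hP.index v : ℕ) = m + 4 := by simp [hP.index_eq_of_mem hv]
  cases v with
  | core c o => exact ⟨c, o, hv⟩
  | vpath b i p =>
    have := index_path_le hP (f := vpath b i) (fun _ => adj_vpath_two)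
      (fun _ hp _ => adj_vpath_of_ne_two hp) p
    omega
  | epath b j p =>
    have := index_path_le hP (f := epath b j) (fun _ => adj_epath_two)
      (fun _ hp _ => adj_epath_of_ne_two hp) p
    omega
  | spath b s p =>
    have := index_path_le hP (f := spath b s) (fun _ => adj_spath_two)
      (fun _ hp _ => adj_spath_of_ne_two hp) p
    omega

lemma image_index_side_union_centres (hloop : ∀ k, (ends k).1 ≠ (ends k).2) {c : Bool}
    {o : Option (Fin m)} {T : Finset (Fin (m + 5))}
    (hT : ∀ r ∈ T, ∃ a, (gadgetGraph ends).Adj a (core c o) ∧ hP.index a = r)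
    (hcard : #T = m + 4) :
    (side m (!c) ∪ centres ends c o).image hP.index = T ∧
      Set.InjOn hP.index ↑(side m (!c) ∪ centres ends c o) := by
  refine hP.image_index_eq hT (fun a ha => adj_core_iff.1 ha) ?_
  have := card_union_le (side m (!c)) (centres ends c o)
  have := card_side_le (n := n) (m := m) (c := !c)
  have := card_centres hloop c o
  omega

lemma exists_mem_side_adj_index_mem {y w z : GadgetVert n m} {c : Bool}
    (hy : ∀ a, (gadgetGraph ends).Adj a y → a = w ∨ a = z ∨ a ∈ side m c)
    {R : Finset (Fin (m + 5))} (hR : ∀ r ∈ R, r < hP.index y) (hcard : 2 < #R) :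
    ∃ a ∈ side m c, (gadgetGraph ends).Adj a y ∧ hP.index a ∈ R := by
  by_contra! h
  have hsub := hP.subset_image_index (S := {w, z})
    (fun r hr => hP.exists_adj_index_eq_of_lt (hR r hr)) fun a ha haR => by
      rcases hy a ha with rfl | rfl | hs
      · simp
      · simp
      · exact absurd haR (h a hs ha)
  have := (card_le_card hsub).trans card_image_le
  have := card_le_two (a := w) (b := z)
  omega

lemma index_le_of_mem_centres {c : Bool} {o o' : Option (Fin m)} {y : GadgetVert n m}
    (hy : y ∈ centres ends c o) (hu : core c o' ∈ P (Fin.last (m + 4))) :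
    (hP.index y : ℕ) ≤ m + 2 := by
  obtain ⟨w, z, hwz⟩ := exists_adj_subset_of_mem_centres hy
  refine (hP.index_le_card (S := insert w (insert z ((side m c).erase (core c o'))))
    fun a ha hlt => ?_).trans ?_
  · rcases hwz a ha with rfl | rfl | hs
    · simp
    · simp
    · refine mem_insert_of_mem (mem_insert_of_mem (mem_erase.2 ⟨?_, hs⟩))
      rintro rfl
      exact (hP.index_eq_of_mem hu ▸ hlt).not_ge (Fin.le_last _)
  · have := card_insert_le w (insert z ((side m c).erase (core c o')))
    have := card_insert_le z ((side m c).erase (core c o'))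
    rw [card_erase_of_mem (core_mem_side o')] at this
    have := card_side_le (n := n) (m := m) (c := c)
    omega

lemma index_le_of_mem_centres_none {c : Bool} {y : GadgetVert n m}
    (hy : y ∈ centres ends c none) : (hP.index y : ℕ) ≤ 3 := by
  obtain ⟨s, -, rfl⟩ := mem_image.1 hy
  refine (hP.index_le_card (S := {spath c s 1, spath c s 3, core c none})
    fun a ha _ => ?_).trans card_le_three
  rcases adj_spath_two ha with rfl | rfl | hs
  · simp
  · simp
  · obtain ⟨o, -, rfl⟩ := mem_image.1 hs
    cases o with
    | none => simp
    | some k => simpa [centres] using mem_centres_of_adj hy ha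

lemma exists_le_index_of_disjoint {c : Bool} {o : Option (Fin m)} {y : GadgetVert n m}
    (hy : y ∈ centres ends c o) {R : Finset (Fin (m + 5))} (hR : #R = 3)
    (hRs : Disjoint ((side m c).image hP.index) R) : ∃ r ∈ R, hP.index y ≤ r := by
  by_contra! h
  obtain ⟨w, z, hwz⟩ := exists_adj_subset_of_mem_centres hy
  obtain ⟨a, ha, -, haR⟩ := exists_mem_side_adj_index_mem hP hwz h (by omega)
  exact disjoint_left.1 hRs (mem_image_of_mem _ ha) haR

lemma subset_image_centres {c : Bool} {o : Option (Fin m)} {Q : Finset (Fin (m + 5))}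
    (hQ : Disjoint ((side m (!c)).image hP.index) Q)
    (hlt : ∀ q ∈ Q, q < hP.index (core c o)) : Q ⊆ (centres ends c o).image hP.index :=
  hP.subset_image_index (fun q hq => hP.exists_adj_index_eq_of_lt (hlt q hq)) fun _ ha haQ =>
    (mem_union.1 (adj_core_iff.1 ha)).resolve_left
      fun hs => disjoint_left.1 hQ (mem_image_of_mem _ hs) haQ

/-- If `e` lies above `y`, the part of `y` holds a centre adjacent to `e`. If it lies below, then
replacing the top of `R` by the part of `e` leaves three parts below `y` containing no core of `A`
other than `e`, so `y` is adjacent to `e`. Either way the part of `y` holds a centre of `e`, and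
those lie in parts `≤ 3`. -/
lemma index_le_three_of_max {o : Option (Fin m)} {y : GadgetVert n m} {R : Finset (Fin (m + 5))}
    (hy : y ∈ centres ends false o)
    (hQB : Disjoint ((side m true).image hP.index) ((centres ends false o).image hP.index))
    (hyQ : ∀ y' ∈ centres ends false o, hP.index y' ≤ hP.index y)
    (hRA : Disjoint ((side m false).image hP.index) R) (hR : #R = 3)
    (hyR : hP.index y ∈ R) (hRy : ∀ r ∈ R, r ≤ hP.index y)
    (hA : Set.InjOn hP.index ↑(side (n := n) m false)) : (hP.index y : ℕ) ≤ 3 := by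
  have he : hP.index (core false none) ∉ R :=
    disjoint_left.1 hRA (mem_image_of_mem _ (core_mem_side none))
  rcases lt_or_gt_of_ne (ne_of_mem_of_not_mem hyR he).symm with hlt | hgt
  · by_contra! h3
    set R' := insert (hP.index (core false none)) (R.erase (hP.index y))
    have hR'y : ∀ r ∈ R', r < hP.index y := by
      intro r hr
      rcases mem_insert.1 hr with rfl | hr
      · exact hlt
      · exact lt_of_le_of_ne (hRy r (mem_of_mem_erase hr)) (ne_of_mem_erase hr)
    have hR' : #R' = 3 := by
      rw [card_insert_of_notMem (fun h => he (mem_of_mem_erase h)), card_erase_of_mem hyR, hR]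
    obtain ⟨w, z, hwz⟩ := exists_adj_subset_of_mem_centres hy
    obtain ⟨a, ha, hay, haR⟩ := exists_mem_side_adj_index_mem hP hwz hR'y (by omega)
    have : a = core false none := hA ha (core_mem_side none) <| by
      rcases mem_insert.1 haR with h | h
      · exact h
      · exact absurd (mem_of_mem_erase h) (disjoint_left.1 hRA (mem_image_of_mem _ ha))
    subst this
    exact h3.not_ge (index_le_of_mem_centres_none hP (mem_centres_of_adj hy hay))
  · have hQe : ∀ q ∈ (centres ends false o).image hP.index, q < hP.index (core false none) := by
      simpa only [forall_mem_image] using fun x hx => (hyQ x hx).trans_lt hgt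
    obtain ⟨y', hy', hyy'⟩ :=
      mem_image.1 (subset_image_centres hP (c := false) hQB hQe (mem_image_of_mem _ hy))
    rw [← hyy']
    exact index_le_of_mem_centres_none hP hy'

lemma index_ne_and_mem_of_lt (hloop : ∀ k, (ends k).1 ≠ (ends k).2) {k : Fin m}
    {Q : Finset (Fin (m + 5))} (hQ : #Q = 3) (hQB : Disjoint ((side m true).image hP.index) Q)
    (hlt : ∀ q ∈ Q, q < hP.index (core false (some k))) :
    hP.index (vpath false (ends k).1 2) ≠ hP.index (vpath false (ends k).2 2) ∧
      hP.index (vpath false (ends k).1 2) ∈ Q ∧ hP.index (vpath false (ends k).2 2) ∈ Q := by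
  obtain ⟨himg, hinj⟩ :=
    image_eq_and_injOn_of_subset_image (subset_image_centres hP (c := false) hQB hlt)
      (by rw [card_centres hloop, hQ])
  have h1 : vpath false (ends k).1 2 ∈ centres ends false (some k) := by simp [centres]
  have h2 : vpath false (ends k).2 2 ∈ centres ends false (some k) := by simp [centres]
  exact ⟨fun h => hloop k (by simpa using hinj h1 h2 h), himg ▸ mem_image_of_mem _ h1,
    himg ▸ mem_image_of_mem _ h2⟩

lemma three_le_of_index_core_le {M : Fin (m + 5)} {R : Finset (Fin (m + 5))}
    (hRA : Disjoint ((side m false).image hP.index) R) (hR : #R = 3) (hRM : ∀ r ∈ R, r ≤ M)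
    {o : Option (Fin m)} (ho : hP.index (core false o) ≤ M) : 3 ≤ (M : ℕ) := by
  have hoR : hP.index (core false o) ∉ R :=
    disjoint_left.1 hRA (mem_image_of_mem _ (core_mem_side o))
  have := card_le_card (insert_subset (mem_Iic.2 ho) fun r hr => mem_Iic.2 (hRM r hr))
  rw [card_insert_of_notMem hoR, hR, Fin.card_Iic] at this
  omega

lemma eq_of_index_core_le {M : Fin (m + 5)} {R : Finset (Fin (m + 5))}
    (hRA : Disjoint ((side m false).image hP.index) R) (hR : #R = 3) (hRM : ∀ r ∈ R, r ≤ M)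
    (hM : (M : ℕ) ≤ 3) (hA : Set.InjOn hP.index ↑(side (n := n) m false)) {o₁ o₂ : Option (Fin m)}
    (h₁ : hP.index (core false o₁) ≤ M) (h₂ : hP.index (core false o₂) ≤ M) : o₁ = o₂ := by
  have hAR : ∀ o, hP.index (core false o) ∉ R := fun o =>
    disjoint_left.1 hRA (mem_image_of_mem _ (core_mem_side o))
  by_contra hne
  have h₁₂ : hP.index (core false o₁) ∉ insert (hP.index (core false o₂)) R := by
    rw [mem_insert, not_or]
    exact ⟨fun h => hne (by simpa using hA (core_mem_side o₁) (core_mem_side o₂) h), hAR o₁⟩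
  have := card_le_card (insert_subset (mem_Iic.2 h₁)
    (insert_subset (mem_Iic.2 h₂) fun r hr => mem_Iic.2 (hRM r hr)))
  rw [card_insert_of_notMem h₁₂, card_insert_of_notMem (hAR o₂), hR, Fin.card_Iic] at this
  omega

/-- For `k ≠ k₀` the part `M = 3` holds a centre adjacent to `e_k`; its core neighbour below
part `3` can only be `e_{k₀}`. -/
lemma exists_common_end {o : Option (Fin m)} {y : GadgetVert n m} {R : Finset (Fin (m + 5))}
    (hy : y ∈ centres ends false o)
    (hQB : Disjoint ((side m true).image hP.index) ((centres ends false o).image hP.index))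
    (hyQ : ∀ y' ∈ centres ends false o, hP.index y' ≤ hP.index y)
    (hRA : Disjoint ((side m false).image hP.index) R) (hR : #R = 3)
    (hRy : ∀ r ∈ R, r ≤ hP.index y) (hA : Set.InjOn hP.index ↑(side (n := n) m false))
    (hy3 : (hP.index y : ℕ) ≤ 3) {k₀ : Fin m}
    (hk₀ : hP.index (core false (some k₀)) ≤ hP.index y) (k : Fin m) :
    ∃ x, (x = (ends k).1 ∨ x = (ends k).2) ∧ (x = (ends k₀).1 ∨ x = (ends k₀).2) := by
  by_cases hk : k = k₀
  · subst hk
    exact ⟨_, Or.inl rfl, Or.inl rfl⟩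
  have hgt : hP.index y < hP.index (core false (some k)) :=
    lt_of_not_ge fun h =>
      hk (Option.some_injective _ (eq_of_index_core_le hP hRA hR hRy hy3 hA h hk₀))
  obtain ⟨y', hy', hy'y⟩ := mem_image.1 (subset_image_centres hP (c := false) hQB (fun q hq => by
    obtain ⟨x, hx, rfl⟩ := mem_image.1 hq
    exact (hyQ x hx).trans_lt hgt) (mem_image_of_mem _ hy))
  obtain ⟨w, z, hwz⟩ := exists_adj_subset_of_mem_centres hy'
  obtain ⟨a, ha, hay, haR⟩ := exists_mem_side_adj_index_mem hP hwz
    (R := Iio (hP.index y')) (fun r => mem_Iio.1)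
    (by rw [Fin.card_Iio, hy'y]; have := three_le_of_index_core_le hP hRA hR hRy hk₀; omega)
  obtain ⟨o', -, rfl⟩ := mem_image.1 ha
  obtain rfl := eq_of_index_core_le hP hRA hR hRy hy3 hA (hy'y ▸ (mem_Iio.1 haR).le) hk₀
  exact exists_common_end_of_mem_centres hk hy' (mem_centres_of_adj hy' hay)

lemma exists_coloring_of_disjoint (hloop : ∀ k, (ends k).1 ≠ (ends k).2) {o o' : Option (Fin m)}
    (hQB : Disjoint ((side m true).image hP.index) ((centres ends false o).image hP.index))
    (hQ : #((centres ends false o).image hP.index) = 3)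
    (hRA : Disjoint ((side m false).image hP.index) ((centres ends true o').image hP.index))
    (hR : #((centres ends true o').image hP.index) = 3)
    (hA : Set.InjOn hP.index ↑(side (n := n) m false)) :
    ∃ g : Fin n → Fin 3, ∀ k, g (ends k).1 ≠ g (ends k).2 := by
  obtain ⟨y, hy, hyQ⟩ := exists_max_image (centres ends false o) hP.index
    (card_pos.1 (by rw [card_centres hloop]; norm_num))
  have hRy : ∀ r ∈ (centres ends true o').image hP.index, r ≤ hP.index y := by
    simp only [forall_mem_image]
    intro z hz
    obtain ⟨q, hq, hzq⟩ := exists_le_index_of_disjoint hP hz hQ hQB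
    obtain ⟨y', hy', rfl⟩ := mem_image.1 hq
    exact hzq.trans (hyQ y' hy')
  have hyR : hP.index y ∈ (centres ends true o').image hP.index := by
    obtain ⟨r, hr, hyr⟩ := exists_le_index_of_disjoint hP hy hR hRA
    exact le_antisymm hyr (hRy r hr) ▸ hr
  have hy3 := index_le_three_of_max hP hy hQB hyQ hRA hR hyR hRy hA
  by_cases hall : ∀ k, hP.index y < hP.index (core false (some k))
  · refine exists_fin_three_coloring_of_mem ends (fun x => hP.index (vpath false x 2)) _ hQ.le
      fun k => index_ne_and_mem_of_lt hP hloop hQ hQB ?_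
    simpa only [forall_mem_image] using fun x hx => (hyQ x hx).trans_lt (hall k)
  · obtain ⟨k₀, hk₀⟩ := not_forall.1 hall
    exact exists_fin_three_coloring_of_meets ends hloop _ _
      (exists_common_end hP hy hQB hyQ hRA hR hRy hA hy3 (not_lt.1 hk₀))

lemma exists_index_core_true_eq {o : Option (Fin m)} (hu : core false o ∈ P (Fin.last (m + 4)))
    (hBQ : (side m true ∪ centres ends false o).image hP.index = univ.erase (Fin.last _)) :
    ∃ o', hP.index (core true o') = ⟨m + 3, by omega⟩ := by
  have h : (⟨m + 3, by omega⟩ : Fin (m + 5)) ∈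
      (side m true ∪ centres ends false o).image hP.index := by
    rw [hBQ]
    simp [Fin.ext_iff]
  rw [image_union, mem_union] at h
  rcases h with h | h
  · obtain ⟨a, ha, hav⟩ := mem_image.1 h
    obtain ⟨o', -, rfl⟩ := mem_image.1 ha
    exact ⟨o', hav⟩
  · obtain ⟨y, hy, hyv⟩ := mem_image.1 h
    have := index_le_of_mem_centres hP hy hu
    simp [hyv] at this

lemma exists_coloring_of_core_mem_last (hP : (gadgetGraph ends).IsTransitivePartition P)
    (hloop : ∀ k, (ends k).1 ≠ (ends k).2)
    {o : Option (Fin m)} (hu : core false o ∈ P (Fin.last (m + 4))) :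
    ∃ g : Fin n → Fin 3, ∀ k, g (ends k).1 ≠ g (ends k).2 := by
  have hu' := hP.index_eq_of_mem hu
  obtain ⟨hBQ, hBQinj⟩ := image_index_side_union_centres hP hloop (c := false) (o := o)
    (T := univ.erase (Fin.last _))
    (fun r hr =>
      hP.exists_adj_index_eq_of_lt (hu' ▸ Fin.lt_last_iff_ne_last.2 (ne_of_mem_erase hr)))
    (by simp)
  simp only [Bool.not_false] at hBQ hBQinj
  obtain ⟨o', ho'⟩ := exists_index_core_true_eq hP hu hBQ
  have hT : ∀ r ∈ univ.erase (⟨m + 3, by omega⟩ : Fin (m + 5)),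
      ∃ a, (gadgetGraph ends).Adj a (core true o') ∧ hP.index a = r := by
    intro r hr
    rcases eq_or_ne r (Fin.last _) with rfl | hne
    · exact ⟨_, core_adj_core, hu'⟩
    · refine hP.exists_adj_index_eq_of_lt ?_
      have h1 := Fin.val_ne_of_ne (ne_of_mem_erase hr)
      have h2 := Fin.val_ne_of_ne hne
      rw [ho', Fin.lt_def]
      simp only [Fin.val_last] at h1 h2 ⊢
      omega
  obtain ⟨-, hARinj⟩ := image_index_side_union_centres hP hloop hT (by simp)
  simp only [Bool.not_true] at hARinj
  exact exists_coloring_of_disjoint hP hloop (disjoint_image_of_injOn hBQinj disjoint_side_centres)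
    (by rw [card_image_of_injOn (hBQinj.mono (by simp)), card_centres hloop])
    (disjoint_image_of_injOn hARinj disjoint_side_centres)
    (by rw [card_image_of_injOn (hARinj.mono (by simp)), card_centres hloop])
    (hARinj.mono (by simp))

end GadgetVert

theorem coloring_of_gadget_transitive_general {n m : ℕ} (G : SimpleGraph (Fin n))
    (ends : Fin m → Fin n × Fin n)
    (hends : ∀ a b : Fin n, G.Adj a b ↔ ∃ j : Fin m, s(a, b) = s((ends j).1, (ends j).2))
    (hpart : ∃ P : Fin (m + 5) → Finset (GadgetVert n m),
      (gadgetGraph ends).IsTransitivePartition P) :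
    ∃ g : Fin n → Fin 3, ∀ a b : Fin n, G.Adj a b → g a ≠ g b := by
  have hloop : ∀ k, (ends k).1 ≠ (ends k).2 := fun k h =>
    G.loopless.irrefl _ ((hends _ _).2 ⟨k, by rw [h]⟩)
  obtain ⟨P, hP⟩ := hpart
  obtain ⟨g, hg⟩ : ∃ g : Fin n → Fin 3, ∀ k, g (ends k).1 ≠ g (ends k).2 := by
    obtain ⟨c, o, hu⟩ := GadgetVert.exists_core_mem_last hP
    cases c
    · exact GadgetVert.exists_coloring_of_core_mem_last hP hloop hu
    · exact GadgetVert.exists_coloring_of_core_mem_last (hP.map (GadgetVert.swapIso ends)) hloop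
        (o := o) (mem_map_equiv.2 hu)
  refine ⟨g, fun a b hab => ?_⟩
  obtain ⟨k, hk⟩ := (hends a b).1 hab
  rcases Sym2.eq_iff.1 hk with ⟨rfl, rfl⟩ | ⟨rfl, rfl⟩
  exacts [hg k, (hg k).symm]

/-- If the constructed graph `G'` has a transitive `(m+5)`-partition, then `G`
(a graph on `n` vertices whose edge set is exactly enumerated, without repetition,
by `ends : Fin m → Fin n × Fin n`) has a proper 3-coloring. -/
theorem coloring_of_gadget_transitive {n m : ℕ} (G : SimpleGraph (Fin n))
    (ends : Fin m → Fin n × Fin n)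
    (hends : ∀ a b : Fin n, G.Adj a b ↔ ∃ j : Fin m, s(a, b) = s((ends j).1, (ends j).2))
    (hinj : Function.Injective fun j : Fin m => s((ends j).1, (ends j).2))
    (hpart : ∃ P : Fin (m + 5) → Finset (GadgetVert n m),
      (gadgetGraph ends).IsTransitivePartition P) :
    ∃ g : Fin n → Fin 3, ∀ a b : Fin n, G.Adj a b → g a ≠ g b :=
  coloring_of_gadget_transitive_general G ends hends hpart
end
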